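/- arXiv:2201.07791 — 10 statements merged into one kernel-verified Lean document; each statement's English description precedes it below -/
import Mathlib

section
/- For every nonzero real number α with |α| ≤ 2^{m+ℓ−1}, the error when approximating P(α) by T(α) satisfies |P(α) − T(α)| < (1/2^{m+ℓ})·(3π²/4). -/
/-- The exact probability `P(α)` of observing a frequency with argument `α` in
Shor's order-finding algorithm, for order `r` and exponent length `m + ℓ`. -/
noncomputable def ShorP (r m ℓ : ℕ) (α : ℝ) : ℝ :=
  let N : ℝ := 2 ^ (m + ℓ)
  let β : ℝ := ((2 ^ (m + ℓ) % r : ℕ) : ℝ)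
  let L : ℝ := ((2 ^ (m + ℓ) / r : ℕ) : ℝ)
  if α = 0 then
    (L ^ 2 * r + (2 * L + 1) * β) / 2 ^ (2 * (m + ℓ))
  else
    β / 2 ^ (2 * (m + ℓ)) *
        ((1 - Real.cos (2 * Real.pi * α * (L + 1) / N)) /
          (1 - Real.cos (2 * Real.pi * α / N))) +
      ((r : ℝ) - β) / 2 ^ (2 * (m + ℓ)) *
        ((1 - Real.cos (2 * Real.pi * α * L / N)) /
          (1 - Real.cos (2 * Real.pi * α / N)))

/-- The first approximation `T(α)` of `P(α)`. -/
noncomputable def ShorT (r m ℓ : ℕ) (α : ℝ) : ℝ :=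
  (r : ℝ) / 2 ^ (2 * (m + ℓ)) *
    ((1 - Real.cos (2 * Real.pi * α / r)) /
      (1 - Real.cos (2 * Real.pi * α / 2 ^ (m + ℓ))))

lemma sub_sin_le_sq {d : ℝ} (hd : 0 ≤ d) : d - Real.sin d ≤ d ^ 2 / 2 := by
  have hderiv : ∀ x : ℝ, HasDerivAt (fun x => Real.sin x - x + x ^ 2 / 2)
      (Real.cos x - 1 + x) x := by
    intro x
    have h1 := ((Real.hasDerivAt_sin x).sub (hasDerivAt_id x)).add
      ((hasDerivAt_pow 2 x).div_const 2)
    exact h1.congr_deriv (by norm_num)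
  have hmono : MonotoneOn (fun x => Real.sin x - x + x ^ 2 / 2) (Set.Ici 0) := by
    apply monotoneOn_of_deriv_nonneg (convex_Ici 0)
    · exact (Continuous.continuousOn (by continuity))
    · intro x _
      exact (hderiv x).differentiableAt.differentiableWithinAt
    · intro x hx
      rw [interior_Ici, Set.mem_Ioi] at hx
      rw [(hderiv x).deriv]
      rcases le_or_gt x 2 with h | h
      · nlinarith [Real.one_sub_sq_div_two_le_cos (x := x)]
      · nlinarith [Real.neg_one_le_cos x]
  have h0 := hmono (Set.self_mem_Ici) (Set.mem_Ici.mpr hd) hd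
  simp only [Real.sin_zero] at h0
  nlinarith [h0]

lemma abs_sub_sin (d : ℝ) : |d - Real.sin d| ≤ d ^ 2 / 2 := by
  rcases le_or_gt 0 d with h | h
  · rw [abs_of_nonneg (by linarith [Real.sin_le h])]
    exact sub_sin_le_sq h
  · rw [abs_of_nonpos (by linarith [Real.le_sin h.le])]
    have h2 := sub_sin_le_sq (neg_nonneg.mpr h.le)
    rw [Real.sin_neg] at h2
    nlinarith [h2]

lemma cos_taylor (x d : ℝ) : |Real.cos (x + d) - Real.cos x + d * Real.sin x| ≤ d ^ 2 := by
  have h1 : Real.cos (x + d) - Real.cos x + d * Real.sin x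
      = Real.cos x * (Real.cos d - 1) + Real.sin x * (d - Real.sin d) := by
    rw [Real.cos_add]; ring
  rw [h1]
  have hb : |Real.cos d - 1| ≤ d ^ 2 / 2 := by
    rw [abs_sub_comm, abs_of_nonneg (by linarith [Real.cos_le_one d])]
    linarith [Real.one_sub_sq_div_two_le_cos (x := d)]
  have h2 : |Real.cos x * (Real.cos d - 1)| ≤ d ^ 2 / 2 := by
    rw [abs_mul]
    calc |Real.cos x| * |Real.cos d - 1| ≤ 1 * (d ^ 2 / 2) :=
          mul_le_mul (Real.abs_cos_le_one x) hb (abs_nonneg _) zero_le_one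
      _ = d ^ 2 / 2 := one_mul _
  have h3 : |Real.sin x * (d - Real.sin d)| ≤ d ^ 2 / 2 := by
    rw [abs_mul]
    calc |Real.sin x| * |d - Real.sin d| ≤ 1 * (d ^ 2 / 2) :=
          mul_le_mul (Real.abs_sin_le_one x) (abs_sub_sin d) (abs_nonneg _) zero_le_one
      _ = d ^ 2 / 2 := one_mul _
  calc |Real.cos x * (Real.cos d - 1) + Real.sin x * (d - Real.sin d)|
      ≤ |Real.cos x * (Real.cos d - 1)| + |Real.sin x * (d - Real.sin d)| := abs_add_le _ _
    _ ≤ d ^ 2 := by linarith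

set_option maxHeartbeats 2000000 in
theorem stmt_0 (r m ℓ : ℕ) (hr : 2 ≤ r) (hm : 1 ≤ m) (hℓ : 1 ≤ ℓ) (hrm : r < 2 ^ m)
    (α : ℝ) (hα : α ≠ 0) (hα' : |α| ≤ 2 ^ (m + ℓ - 1)) :
    |ShorP r m ℓ α - ShorT r m ℓ α| < 1 / 2 ^ (m + ℓ) * (3 * Real.pi ^ 2 / 4) := by
  have hπ := Real.pi_pos
  simp only [ShorP, ShorT, if_neg hα]
  set n := m + ℓ with hn
  have hr0 : 0 < r := by omega
  have hdm : r * (2 ^ n / r) + 2 ^ n % r = 2 ^ n := Nat.div_add_mod _ _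
  have h2rN : 2 * r ≤ 2 ^ n := by
    have ha : 2 ^ (m + 1) ≤ 2 ^ n := Nat.pow_le_pow_right (by norm_num) (by omega)
    have hb : 2 * 2 ^ m = 2 ^ (m + 1) := by ring
    omega
  set β : ℝ := ((2 ^ n % r : ℕ) : ℝ) with hβdef
  set L : ℝ := ((2 ^ n / r : ℕ) : ℝ) with hLdef
  set N : ℝ := (2 : ℝ) ^ n with hNdef
  have hN0 : (0 : ℝ) < N := by positivity
  have hrR : (2 : ℝ) ≤ (r : ℝ) := by exact_mod_cast hr
  have hNL : (r : ℝ) * L + β = N := by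
    rw [hβdef, hLdef, hNdef]
    exact_mod_cast hdm
  have hβ0 : 0 ≤ β := by rw [hβdef]; positivity
  have hβr : β < (r : ℝ) := by
    rw [hβdef]; exact_mod_cast Nat.mod_lt _ hr0
  have hrN : 2 * (r : ℝ) ≤ N := by
    rw [hNdef]; exact_mod_cast h2rN
  have hαN : |α| ≤ N / 2 := by
    have h1 : (2 : ℝ) ^ (m + ℓ - 1) = N / 2 := by
      rw [hNdef, eq_div_iff (by norm_num), ← pow_succ]
      congr 1
      omega
    rw [← h1]; exact hα'
  have h2N : (2 : ℝ) ^ (2 * n) = N ^ 2 := by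
    rw [hNdef, ← pow_mul, mul_comm]
  rw [h2N]
  clear_value β L N
  set θ := 2 * Real.pi * α / N with hθdef
  set φ := 2 * Real.pi * α / (r : ℝ) with hφdef
  set c := 2 * Real.pi * α / ((r : ℝ) * N) with hcdef
  clear_value θ φ c
  have hrne : (r : ℝ) ≠ 0 := by positivity
  have hNne : N ≠ 0 := ne_of_gt hN0
  have h1 : 2 * Real.pi * α * (L + 1) / N = φ + c * ((r : ℝ) - β) := by
    have hne : (r : ℝ) * L + β ≠ 0 := by rw [hNL]; exact hNne
    have hne' : L * (r : ℝ) + β ≠ 0 := by rw [mul_comm]; exact hne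
    rw [hφdef, hcdef, ← hNL]
    field_simp
    ring
  have h2 : 2 * Real.pi * α * L / N = φ + -(c * β) := by
    have hne : (r : ℝ) * L + β ≠ 0 := by rw [hNL]; exact hNne
    have hne' : L * (r : ℝ) + β ≠ 0 := by rw [mul_comm]; exact hne
    rw [hφdef, hcdef, ← hNL]
    field_simp
    ring
  rw [h1, h2]
  -- bound on the denominator
  have hθπ : |θ| ≤ Real.pi := by
    have habs : |θ| = 2 * Real.pi * |α| / N := by
      rw [hθdef, abs_div, abs_of_pos hN0, abs_mul,
        abs_of_pos (by positivity : (0 : ℝ) < 2 * Real.pi)]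
    rw [habs, div_le_iff₀ hN0]
    nlinarith [abs_nonneg α]
  have hθsq : θ ^ 2 = 4 * Real.pi ^ 2 * α ^ 2 / N ^ 2 := by
    rw [hθdef]; field_simp; ring
  have hD : 8 * α ^ 2 / N ^ 2 ≤ 1 - Real.cos θ := by
    have hc := Real.cos_le_one_sub_mul_cos_sq hθπ
    have : 2 / Real.pi ^ 2 * θ ^ 2 = 8 * α ^ 2 / N ^ 2 := by
      rw [hθsq]; field_simp; ring
    linarith [hc, this.symm.le, this.le]
  have hα2 : 0 < α ^ 2 := by positivity
  have hDpos : 0 < 1 - Real.cos θ := by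
    have : 0 < 8 * α ^ 2 / N ^ 2 := by positivity
    linarith
  have hDne : 1 - Real.cos θ ≠ 0 := ne_of_gt hDpos
  set D := 1 - Real.cos θ with hDdef
  clear_value D
  set num := β * (Real.cos φ - Real.cos (φ + c * ((r : ℝ) - β))) +
      ((r : ℝ) - β) * (Real.cos φ - Real.cos (φ + -(c * β))) with hnumdef
  have hEq : β / N ^ 2 * ((1 - Real.cos (φ + c * ((r : ℝ) - β))) / D) +
      ((r : ℝ) - β) / N ^ 2 * ((1 - Real.cos (φ + -(c * β))) / D) -
      (r : ℝ) / N ^ 2 * ((1 - Real.cos φ) / D) = num / (N ^ 2 * D) := by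
    rw [hnumdef]
    field_simp
    ring
  rw [hEq]
  -- bound the numerator
  have hnum : |num| ≤ Real.pi ^ 2 * α ^ 2 * r / N ^ 2 := by
    have e1 := cos_taylor φ (c * ((r : ℝ) - β))
    have e2 := cos_taylor φ (-(c * β))
    have hid : num = -(β * (Real.cos (φ + c * ((r : ℝ) - β)) - Real.cos φ +
          (c * ((r : ℝ) - β)) * Real.sin φ) +
        ((r : ℝ) - β) * (Real.cos (φ + -(c * β)) - Real.cos φ +
          (-(c * β)) * Real.sin φ)) := by
      rw [hnumdef]; ring
    have hstep : |num| ≤ β * (c * ((r : ℝ) - β)) ^ 2 + ((r : ℝ) - β) * (c * β) ^ 2 := by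
      rw [hid, abs_neg]
      calc |β * (Real.cos (φ + c * ((r : ℝ) - β)) - Real.cos φ +
              (c * ((r : ℝ) - β)) * Real.sin φ) +
            ((r : ℝ) - β) * (Real.cos (φ + -(c * β)) - Real.cos φ +
              (-(c * β)) * Real.sin φ)|
          ≤ |β * (Real.cos (φ + c * ((r : ℝ) - β)) - Real.cos φ +
              (c * ((r : ℝ) - β)) * Real.sin φ)| +
            |((r : ℝ) - β) * (Real.cos (φ + -(c * β)) - Real.cos φ +
              (-(c * β)) * Real.sin φ)| := abs_add_le _ _
        _ ≤ β * (c * ((r : ℝ) - β)) ^ 2 + ((r : ℝ) - β) * (c * β) ^ 2 := by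
            rw [abs_mul, abs_mul, abs_of_nonneg hβ0,
              abs_of_nonneg (by linarith : (0 : ℝ) ≤ (r : ℝ) - β)]
            have b1 : |Real.cos (φ + c * ((r : ℝ) - β)) - Real.cos φ +
                (c * ((r : ℝ) - β)) * Real.sin φ| ≤ (c * ((r : ℝ) - β)) ^ 2 := e1
            have b2 : |Real.cos (φ + -(c * β)) - Real.cos φ +
                (-(c * β)) * Real.sin φ| ≤ (c * β) ^ 2 := by
              have := e2
              calc |Real.cos (φ + -(c * β)) - Real.cos φ + (-(c * β)) * Real.sin φ|
                  ≤ (-(c * β)) ^ 2 := e2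
                _ = (c * β) ^ 2 := by ring
            exact add_le_add (mul_le_mul_of_nonneg_left b1 hβ0)
              (mul_le_mul_of_nonneg_left b2 (by linarith))
        
    have hc2 : c ^ 2 = 4 * Real.pi ^ 2 * α ^ 2 / ((r : ℝ) ^ 2 * N ^ 2) := by
      rw [hcdef]; field_simp; ring
    have h5 : β * (c * ((r : ℝ) - β)) ^ 2 + ((r : ℝ) - β) * (c * β) ^ 2
        = c ^ 2 * ((r : ℝ) * (β * ((r : ℝ) - β))) := by ring
    have h6 : β * ((r : ℝ) - β) ≤ (r : ℝ) ^ 2 / 4 := by nlinarith [sq_nonneg ((r : ℝ) - 2 * β)]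
    have h7 : c ^ 2 * ((r : ℝ) * (β * ((r : ℝ) - β)))
        ≤ c ^ 2 * ((r : ℝ) * ((r : ℝ) ^ 2 / 4)) := by
      apply mul_le_mul_of_nonneg_left _ (sq_nonneg c)
      apply mul_le_mul_of_nonneg_left h6 (by positivity)
    have h8 : c ^ 2 * ((r : ℝ) * ((r : ℝ) ^ 2 / 4)) = Real.pi ^ 2 * α ^ 2 * r / N ^ 2 := by
      rw [hc2]; field_simp
    calc |num| ≤ β * (c * ((r : ℝ) - β)) ^ 2 + ((r : ℝ) - β) * (c * β) ^ 2 := hstep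
      _ = c ^ 2 * ((r : ℝ) * (β * ((r : ℝ) - β))) := h5
      _ ≤ c ^ 2 * ((r : ℝ) * ((r : ℝ) ^ 2 / 4)) := h7
      _ = Real.pi ^ 2 * α ^ 2 * r / N ^ 2 := h8
  -- final bound
  have hden : 8 * α ^ 2 ≤ N ^ 2 * D := by
    rw [div_le_iff₀ (by positivity : (0 : ℝ) < N ^ 2)] at hD
    linarith [hD]
  rw [abs_div, abs_of_pos (by positivity : (0 : ℝ) < N ^ 2 * D)]
  calc |num| / (N ^ 2 * D)
      ≤ (Real.pi ^ 2 * α ^ 2 * r / N ^ 2) / (8 * α ^ 2) :=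
        div_le_div₀ (by positivity) hnum (by positivity) hden
    _ = Real.pi ^ 2 * r / (8 * N ^ 2) := by field_simp
    _ < 1 / N * (3 * Real.pi ^ 2 / 4) := by
        rw [div_lt_iff₀ (by positivity : (0 : ℝ) < 8 * N ^ 2)]
        have hrlt : (r : ℝ) < 6 * N := by nlinarith
        have : 1 / N * (3 * Real.pi ^ 2 / 4) * (8 * N ^ 2) = 6 * Real.pi ^ 2 * N := by
          field_simp; ring
        rw [this]
        nlinarith [sq_nonneg Real.pi, mul_pos hπ hπ]
end

section
/- For every nonzero real number α with |α| ≤ 2^{m+ℓ−1}, the error when approximating P(α) by P̃(α) satisfies |P(α) − P̃(α)| ≤ ε̃, where ε̃ = (π²/2^{m+ℓ})·(3/4 + (r/2^{m+ℓ})·(1/12)), and moreover ε̃ < π²/2^{m+ℓ}. -/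
open Real


/-- The approximation `P̃(α)` of `P(α)`. -/
noncomputable def ShorPtilde (r m ℓ : ℕ) (α : ℝ) : ℝ :=
  (r : ℝ) / 2 ^ (2 * (m + ℓ)) *
    (2 * (1 - Real.cos (2 * Real.pi * α / r)) /
      (2 * Real.pi * α / 2 ^ (m + ℓ)) ^ 2)


lemma aux_one_sub_cos (t : ℝ) : 1 - Real.cos (2*t) = 2 * Real.sin t ^ 2 := by
  have h := Real.sin_sq_add_cos_sq t
  rw [Real.cos_two_mul]; nlinarith

lemma aux_sin_lip (u v : ℝ) : |Real.sin u - Real.sin v| ≤ |u - v| := by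
  rw [Real.sin_sub_sin, abs_mul, abs_mul, abs_two]
  have h1 : |Real.sin ((u - v)/2)| ≤ |u - v|/2 := by
    have h := Real.abs_sin_le_abs (x := (u - v)/2)
    rwa [abs_div, abs_two] at h
  have h2 := Real.abs_cos_le_one ((u + v)/2)
  have h0 : (0:ℝ) ≤ |Real.sin ((u - v)/2)| := abs_nonneg _
  nlinarith [abs_nonneg (Real.cos ((u+v)/2))]

lemma aux_sin_sq_sub (a b : ℝ) :
    Real.sin a ^ 2 - Real.sin b ^ 2 = Real.sin (a - b) * Real.sin (a + b) := by
  rw [Real.sin_sub, Real.sin_add]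
  linear_combination (Real.sin b ^ 2) * Real.sin_sq_add_cos_sq a
    - (Real.sin a ^ 2) * Real.sin_sq_add_cos_sq b

lemma aux_key (a θ : ℝ) :
    |Real.sin a ^ 2 - Real.sin θ ^ 2| ≤ |a - θ| * (|Real.sin (2*θ)| + |a - θ|) := by
  rw [aux_sin_sq_sub, abs_mul]
  have h1 : |Real.sin (a - θ)| ≤ |a - θ| := Real.abs_sin_le_abs
  have h2 : |Real.sin (a + θ)| ≤ |Real.sin (2*θ)| + |a - θ| := by
    have h3 := aux_sin_lip (a + θ) (2*θ)
    have h4 := abs_sub_abs_le_abs_sub (Real.sin (a+θ)) (Real.sin (2*θ))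
    have he : a + θ - 2*θ = a - θ := by ring
    rw [he] at h3
    linarith
  have := abs_nonneg (Real.sin (a - θ))
  have := abs_nonneg (a - θ)
  have := abs_nonneg (Real.sin (2*θ))
  nlinarith

lemma aux_cub {y : ℝ} (hy0 : 0 ≤ y) (hy : y ≤ Real.pi/2) :
    y^2 - Real.sin y ^ 2 ≤ (18/25) * y^4 := by
  rcases le_or_gt y 1 with h1 | h1
  · rcases eq_or_lt_of_le hy0 with h0 | h0
    · simp [← h0]
    have hs := Real.sin_gt_sub_cube h0
    have hy3 : y^3 ≤ y := by
      nlinarith [mul_nonneg (mul_nonneg hy0 (by linarith : (0:ℝ) ≤ 1 - y))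
        (by linarith : (0:ℝ) ≤ 1 + y)]
    have hnn : 0 ≤ y - y^3/4 := by linarith
    nlinarith [sq_nonneg (y - y^3/4), sq_nonneg y, pow_pos h0 3]
  · have hj : 2/Real.pi * |y| ≤ |Real.sin y| := Real.mul_abs_le_abs_sin (by
      rw [abs_of_nonneg hy0]; exact hy)
    have hπ : Real.pi < 3.15 := Real.pi_lt_d2
    have hπ0 : 0 < Real.pi := Real.pi_pos
    rw [abs_of_nonneg hy0] at hj
    have hsq : (2/Real.pi * y)^2 ≤ Real.sin y ^ 2 := by
      rw [← sq_abs (Real.sin y)]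
      exact pow_le_pow_left₀ (by positivity) hj 2
    have hy2 : y^2 ≤ Real.pi^2/4 := by nlinarith
    have h4 : (4/Real.pi^2) * y^2 ≤ Real.sin y ^2 := by
      have he : (2/Real.pi * y)^2 = 4/Real.pi^2 * y^2 := by field_simp; ring
      linarith [he ▸ hsq]
    have hlow : (4/3.15^2 : ℝ) ≤ 4/Real.pi^2 * y^2 := by
      have h1' : (1:ℝ) ≤ y^2 := by nlinarith
      have hd : (4/Real.pi^2 : ℝ) ≥ 4/3.15^2 := by
        apply div_le_div_of_nonneg_left (by norm_num) (by positivity)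
        nlinarith
      nlinarith [sq_nonneg y]
    nlinarith [sq_nonneg (y^2 - 25/36), sq_nonneg y]

lemma aux_g {x : ℝ} (hx0 : x ≠ 0) (hx : |x| ≤ Real.pi/2) :
    0 ≤ 1/Real.sin x^2 - 1/x^2 ∧ 1/Real.sin x^2 - 1/x^2 ≤ 2 := by
  have hπ : Real.pi < 3.15 := Real.pi_lt_d2
  have hπ0 : 0 < Real.pi := Real.pi_pos
  have hy0 : 0 < |x| := abs_pos.mpr hx0
  have hj : 2/Real.pi * |x| ≤ |Real.sin x| := Real.mul_abs_le_abs_sin hx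
  have hs_low : 4/Real.pi^2 * x^2 ≤ Real.sin x ^ 2 := by
    have h := pow_le_pow_left₀ (by positivity) hj 2
    rw [sq_abs] at h
    have he : (2/Real.pi * |x|)^2 = 4/Real.pi^2 * x^2 := by
      rw [mul_pow, sq_abs]; field_simp; ring
    linarith [he ▸ h]
  have hx2 : 0 < x^2 := by positivity
  have hs_pos : 0 < Real.sin x ^2 := lt_of_lt_of_le (by positivity) hs_low
  have hcub : x^2 - Real.sin x^2 ≤ (18/25)*x^4 := by
    have habs : Real.sin |x| ^2 = Real.sin x ^2 := by
      rcases abs_cases x with ⟨h,_⟩|⟨h,_⟩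
      · rw [h]
      · rw [h, Real.sin_neg]; ring
    have h := aux_cub (abs_nonneg x) hx
    rw [habs, sq_abs] at h
    have h4 : |x|^4 = x^4 := by
      rw [pow_abs, abs_of_nonneg (by positivity : (0:ℝ) ≤ x^4)]
    rwa [h4] at h
  constructor
  · rw [sub_nonneg]
    exact one_div_le_one_div_of_le hs_pos Real.sin_sq_le_sq
  · have hs_low' : (4/3.15^2 : ℝ)*x^2 ≤ Real.sin x^2 := by
      have : (4/3.15^2 : ℝ)*x^2 ≤ 4/Real.pi^2*x^2 := by
        have hd : (4/3.15^2 : ℝ) ≤ 4/Real.pi^2 := by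
          apply div_le_div_of_nonneg_left (by norm_num) (by positivity)
          nlinarith
        nlinarith
      linarith
    have key : x^2 - Real.sin x^2 ≤ 2 * (x^2 * Real.sin x^2) := by
      nlinarith [mul_le_mul_of_nonneg_left hs_low' hx2.le]
    have heq : 1/Real.sin x^2 - 1/x^2 = (x^2 - Real.sin x^2)/(x^2 * Real.sin x^2) := by
      field_simp
      rw [sub_div, div_self hs_pos.ne']
    rw [heq, div_le_iff₀ (by positivity)]
    linarith


lemma aux_T2num {r N β L x θ : ℝ} (hr0 : 0 < r) (hN0 : 0 < N)
    (hβ0 : 0 ≤ β) (hβr : β ≤ r) (hdiv : r * L + β = N)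
    (hθx : θ = x * (N/r)) :
    |(β * Real.sin ((L+1)*x) ^2 + (r-β) * Real.sin (L*x) ^2) - r * Real.sin θ ^2|
      ≤ x^2 * (N + r/4) := by
  set a : ℝ := (L+1)*x with had
  set b : ℝ := L*x with hbd
  clear_value a b
  have hx2 : 0 ≤ x^2 := sq_nonneg x
  have haθ : a - θ = x * ((r-β)/r) := by
    rw [had, hθx]
    field_simp
    linear_combination x * hdiv
  have hbθ : b - θ = -(x * (β/r)) := by
    rw [hbd, hθx]
    field_simp
    linear_combination x * hdiv
  have hsin2θ : |Real.sin (2*θ)| ≤ 2*|x| * (N/r) := by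
    calc |Real.sin (2*θ)| ≤ |2*θ| := Real.abs_sin_le_abs
    _ = 2*|θ| := by rw [abs_mul, abs_two]
    _ = 2*(|x| * (N/r)) := by
        rw [hθx, abs_mul, abs_of_pos (show (0:ℝ) < N/r by positivity)]
    _ = 2*|x| * (N/r) := by ring
  have habsa : |a - θ| = |x| * ((r-β)/r) := by
    rw [haθ, abs_mul, abs_of_nonneg (div_nonneg (by linarith) hr0.le)]
  have habsb : |b - θ| = |x| * (β/r) := by
    rw [hbθ, abs_neg, abs_mul, abs_of_nonneg (div_nonneg hβ0 hr0.le)]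
  have h1 : |Real.sin a^2 - Real.sin θ^2|
      ≤ |x| * ((r-β)/r) * (2*|x| * (N/r) + |x| * ((r-β)/r)) := by
    calc |Real.sin a^2 - Real.sin θ^2| ≤ |a-θ| *(|Real.sin (2*θ)|+|a-θ|) := aux_key a θ
    _ ≤ |a-θ| *(2*|x| * (N/r)+|a-θ|) :=
        mul_le_mul_of_nonneg_left (by linarith) (abs_nonneg _)
    _ = |x| * ((r-β)/r) * (2*|x| * (N/r) + |x| * ((r-β)/r)) := by rw [habsa]
  have h2 : |Real.sin b^2 - Real.sin θ^2|
      ≤ |x| * (β/r) * (2*|x| * (N/r) + |x| * (β/r)) := by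
    calc |Real.sin b^2 - Real.sin θ^2| ≤ |b-θ| *(|Real.sin (2*θ)|+|b-θ|) := aux_key b θ
    _ ≤ |b-θ| *(2*|x| * (N/r)+|b-θ|) :=
        mul_le_mul_of_nonneg_left (by linarith) (abs_nonneg _)
    _ = |x| * (β/r) * (2*|x| * (N/r) + |x| * (β/r)) := by rw [habsb]
  have hstep : |(β * Real.sin a ^2 + (r-β) * Real.sin b ^2) - r * Real.sin θ^2|
      ≤ β * |Real.sin a^2 - Real.sin θ^2| + (r-β) * |Real.sin b^2 - Real.sin θ^2| := by
    have hsplit : (β * Real.sin a ^2 + (r-β) * Real.sin b ^2) - r*Real.sin θ^2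
        = β * (Real.sin a^2 - Real.sin θ^2) + (r-β) * (Real.sin b^2 - Real.sin θ^2) := by
      ring
    rw [hsplit]
    calc |β * (Real.sin a^2 - Real.sin θ^2) + (r-β) * (Real.sin b^2 - Real.sin θ^2)|
        ≤ |β * (Real.sin a^2 - Real.sin θ^2)| + |(r-β) * (Real.sin b^2 - Real.sin θ^2)| :=
          abs_add_le _ _
    _ = β * |Real.sin a^2 - Real.sin θ^2| + (r-β) * |Real.sin b^2 - Real.sin θ^2| := by
          rw [abs_mul, abs_mul, abs_of_nonneg hβ0, abs_of_nonneg (by linarith : (0:ℝ) ≤ r-β)]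
  have hstep2 : |(β * Real.sin a ^2 + (r-β) * Real.sin b ^2) - r * Real.sin θ^2|
      ≤ β * (|x| * ((r-β)/r) * (2*|x| * (N/r) + |x| * ((r-β)/r)))
        + (r-β) * (|x| * (β/r) * (2*|x| * (N/r) + |x| * (β/r))) := by
    refine hstep.trans (add_le_add ?_ ?_)
    · exact mul_le_mul_of_nonneg_left h1 hβ0
    · exact mul_le_mul_of_nonneg_left h2 (by linarith)
  have heq : β * (|x| * ((r-β)/r) * (2*|x| * (N/r) + |x| * ((r-β)/r)))
        + (r-β) * (|x| * (β/r) * (2*|x| * (N/r) + |x| * (β/r)))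
      = x^2 * (β*(r-β)*(4*N+r))/r^2 := by
    rw [← sq_abs x]
    field_simp
    ring
  rw [heq] at hstep2
  refine hstep2.trans ?_
  clear heq hstep hstep2 h1 h2 hsin2θ habsa habsb haθ hbθ had hbd hθx
  rw [div_le_iff₀ (by positivity : (0:ℝ) < r^2)]
  nlinarith [mul_nonneg (mul_nonneg hx2 (by positivity : (0:ℝ) ≤ 4*N+r))
    (sq_nonneg (r-2*β))]

lemma aux_main {r N β L x θ : ℝ} (hr0 : 0 < r) (hN0 : 0 < N)
    (hβ0 : 0 ≤ β) (hβr : β ≤ r) (hdiv : r * L + β = N) (hrN : 2*r ≤ N)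
    (hx0 : x ≠ 0) (hxabs : |x| ≤ Real.pi/2) (hθx : θ = x * (N/r)) :
    |(β * Real.sin ((L+1)*x) ^2 + (r-β) * Real.sin (L*x) ^2) / (N^2 * Real.sin x ^2)
      - r * Real.sin θ ^2 / (N^2 * x^2)| ≤ 2*r/N^2 + 9/(8*N) := by
  have hx2 : 0 < x^2 := by positivity
  have hg := aux_g hx0 hxabs
  have hs_pos : 0 < Real.sin x ^ 2 := by
    have hj := Real.mul_abs_le_abs_sin hxabs
    have hxa : 0 < |x| := abs_pos.mpr hx0
    have h : 0 < |Real.sin x| := lt_of_lt_of_le (by positivity) hj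
    rw [← sq_abs]
    exact pow_pos h 2
  have hsx : Real.sin x ≠ 0 := by
    intro h; rw [h] at hs_pos; simp at hs_pos
  set A : ℝ := β * Real.sin ((L+1)*x) ^2 + (r-β) * Real.sin (L*x) ^2 with hAd
  have hA0 : 0 ≤ A :=
    add_nonneg (mul_nonneg hβ0 (sq_nonneg _)) (mul_nonneg (by linarith) (sq_nonneg _))
  have hAr : A ≤ r := by
    rw [hAd]
    nlinarith [Real.sin_sq_le_one ((L+1)*x), Real.sin_sq_le_one (L*x)]
  have hT2num := aux_T2num hr0 hN0 hβ0 hβr hdiv hθx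
  rw [← hAd] at hT2num
  clear_value A
  have hdecomp : A / (N^2 * Real.sin x ^2) - r * Real.sin θ ^2 / (N^2 * x^2)
      = A * (1/Real.sin x^2 - 1/x^2) / N^2 + (A - r * Real.sin θ^2) / (N^2 * x^2) := by
    field_simp
    ring
  rw [hdecomp]
  have hT2 : |(A - r*Real.sin θ^2) / (N^2*x^2)| ≤ 9/(8*N) := by
    rw [abs_div, abs_of_pos (show (0:ℝ) < N^2*x^2 by positivity)]
    have h9 : x^2*(N+r/4) ≤ (9/8)*N*x^2 := by nlinarith [hx2, hrN]
    calc |A - r*Real.sin θ^2| / (N^2*x^2) ≤ ((9/8)*N*x^2)/(N^2*x^2) :=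
          div_le_div₀ (by positivity) (hT2num.trans h9) (by positivity) le_rfl
    _ = 9/(8*N) := by field_simp
  have hT1 : |A * (1/Real.sin x^2 - 1/x^2)/N^2| ≤ 2*r/N^2 := by
    rw [abs_div, abs_of_pos (show (0:ℝ) < N^2 by positivity), abs_mul,
      abs_of_nonneg hA0, abs_of_nonneg hg.1]
    have hnum : A * (1/Real.sin x^2 - 1/x^2) ≤ 2*r := by
      nlinarith [mul_le_mul hAr hg.2 hg.1 hr0.le]
    exact div_le_div₀ (by positivity) hnum (by positivity) le_rfl
  exact (abs_add_le _ _).trans (add_le_add hT1 hT2)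

lemma aux_eps {r N : ℝ} (hr0 : 0 ≤ r) (hN0 : 0 < N) (hrN : 2*r ≤ N) :
    2*r/N^2 + 9/(8*N) ≤ Real.pi^2/N*(3/4 + r/N*(1/12)) := by
  have hπ3 : 3 < Real.pi := Real.pi_gt_three
  have hπ2 : (9:ℝ) ≤ Real.pi^2 := by nlinarith
  have hnum : 0 ≤ (3/4)*Real.pi^2*N + Real.pi^2*r/12 - 2*r - (9/8)*N := by
    nlinarith [mul_nonneg (by nlinarith : (0:ℝ) ≤ Real.pi^2) hr0]
  have heq : Real.pi^2/N*(3/4 + r/N*(1/12)) - (2*r/N^2 + 9/(8*N))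
      = ((3/4)*Real.pi^2*N + Real.pi^2*r/12 - 2*r - (9/8)*N)/N^2 := by
    field_simp
    ring
  have hfin := div_nonneg hnum (by positivity : (0:ℝ) ≤ N^2)
  linarith [heq ▸ hfin]

theorem stmt_2 (r m ℓ : ℕ) (hr : 2 ≤ r) (hm : 1 ≤ m) (hℓ : 1 ≤ ℓ) (hrm : r < 2 ^ m)
    (α : ℝ) (hα : α ≠ 0) (hα' : |α| ≤ 2 ^ (m + ℓ - 1)) :
    |ShorP r m ℓ α - ShorPtilde r m ℓ α| ≤
        Real.pi ^ 2 / 2 ^ (m + ℓ) * (3 / 4 + (r : ℝ) / 2 ^ (m + ℓ) * (1 / 12)) ∧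
      Real.pi ^ 2 / 2 ^ (m + ℓ) * (3 / 4 + (r : ℝ) / 2 ^ (m + ℓ) * (1 / 12)) <
        Real.pi ^ 2 / 2 ^ (m + ℓ) := by
  have hπ0 : 0 < Real.pi := Real.pi_pos
  set N : ℝ := (2:ℝ) ^ (m + ℓ) with hN
  have hN0 : (0:ℝ) < N := by rw [hN]; positivity
  have hNnat : ((2^(m+ℓ) : ℕ) : ℝ) = N := by rw [hN]; push_cast; ring
  set β : ℝ := ((2 ^ (m + ℓ) % r : ℕ) : ℝ) with hβ
  set L : ℝ := ((2 ^ (m + ℓ) / r : ℕ) : ℝ) with hL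
  clear_value N β L
  have hr0 : (0:ℝ) < r := by
    have h : (0:ℕ) < r := by omega
    exact_mod_cast h
  have hβ0 : 0 ≤ β := by rw [hβ]; exact Nat.cast_nonneg _
  have hβr : β ≤ (r:ℝ) := by
    have h : 2^(m+ℓ) % r < r := Nat.mod_lt _ (by omega)
    rw [hβ]
    exact_mod_cast h.le
  have hdiv : (r:ℝ) * L + β = N := by
    rw [hβ, hL, ← hNnat]
    exact_mod_cast Nat.div_add_mod (2^(m+ℓ)) r
  have hrN : 2*(r:ℝ) ≤ N := by
    have h2 : 2^(m+1) ≤ 2^(m+ℓ) := Nat.pow_le_pow_right (by norm_num) (by omega)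
    have h3 : 2*2^m = 2^(m+1) := by ring
    have h1 : 2*r ≤ 2^(m+ℓ) := by omega
    rw [← hNnat]
    exact_mod_cast h1
  have hNe : N = 2^(m+ℓ-1)*2 := by
    rw [hN, ← pow_succ]
    congr 1
    omega
  have hαN : |α| ≤ N/2 := by rw [hNe]; linarith [hα']
  set x : ℝ := Real.pi * α / N with hxd
  set θ : ℝ := Real.pi * α / r with hθd
  clear_value x θ
  have hx0 : x ≠ 0 := by
    rw [hxd]
    exact div_ne_zero (mul_ne_zero (ne_of_gt hπ0) hα) (ne_of_gt hN0)
  have hxabs : |x| ≤ Real.pi/2 := by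
    rw [hxd, abs_div, abs_mul, abs_of_pos hπ0, abs_of_pos hN0, div_le_iff₀ hN0]
    nlinarith [mul_le_mul_of_nonneg_left hαN hπ0.le]
  have hθx : θ = x * (N / (r:ℝ)) := by
    rw [hθd, hxd]; field_simp
  have hs_pos : 0 < Real.sin x ^ 2 := by
    have hj := Real.mul_abs_le_abs_sin hxabs
    have hxa : 0 < |x| := abs_pos.mpr hx0
    have h : 0 < |Real.sin x| := lt_of_lt_of_le (by positivity) hj
    rw [← sq_abs]
    exact pow_pos h 2
  have hsx : Real.sin x ≠ 0 := by
    intro h; rw [h] at hs_pos; simp at hs_pos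
  have e4 : (2:ℝ)^(2*(m+ℓ)) = N^2 := by rw [hN, ← pow_mul, Nat.mul_comm]
  have e1 : 2*Real.pi*α*(L+1)/N = 2*((L+1)*x) := by rw [hxd]; field_simp
  have e2 : 2*Real.pi*α*L/N = 2*(L*x) := by rw [hxd]; field_simp
  have e3 : 2*Real.pi*α/N = 2*x := by rw [hxd]; field_simp
  have e5 : 2*Real.pi*α/(r:ℝ) = 2*θ := by rw [hθd]; ring
  have hP : ShorP r m ℓ α
      = (β * Real.sin ((L+1)*x) ^2 + ((r:ℝ)-β) * Real.sin (L*x) ^2)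
          / (N^2 * Real.sin x ^2) := by
    simp only [ShorP, if_neg hα]
    rw [← hβ, ← hL, ← hN, e4, e1, e2, e3, aux_one_sub_cos, aux_one_sub_cos, aux_one_sub_cos]
    field_simp
  have hPt : ShorPtilde r m ℓ α = (r:ℝ) * Real.sin θ ^2 / (N^2 * x^2) := by
    simp only [ShorPtilde]
    rw [← hN, e4, e3, e5, aux_one_sub_cos]
    field_simp
  constructor
  · rw [hP, hPt]
    exact (aux_main hr0 hN0 hβ0 hβr hdiv hrN hx0 hxabs hθx).trans
      (aux_eps hr0.le hN0 hrN)
  · have hfrac : 3/4 + (r:ℝ)/N*(1/12) < 1 := by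
      have h : (r:ℝ)/N ≤ 1/2 := by
        rw [div_le_iff₀ hN0]; linarith
      linarith
    have hpos : 0 < Real.pi^2/N := by positivity
    calc Real.pi^2/N*(3/4+(r:ℝ)/N*(1/12)) < Real.pi^2/N*1 :=
        mul_lt_mul_of_pos_left hfrac hpos
    _ = Real.pi^2/N := mul_one _
end

section
/- For every real number x > 0, the trigamma function satisfies ∑_{k=0}^{∞} 1/(x + k)² < 1/x + 1/(2x²) + 1/(6x³). -/
/-!
With `F y = 1/y + 1/(2y²) + 1/(6y³)` one has the exact identity
`F y - F (y + 1) = 1/y² + 1/(6y³(y+1)³)`, so each term `1/(x+k)²` is strictly smaller than the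
increment `F (x+k) - F (x+k+1)`. These increments telescope, and since `F ≥ 0` their sum is at
most `F x`.
-/

noncomputable def trigammaMajorant (y : ℝ) : ℝ := 1 / y + 1 / (2 * y ^ 2) + 1 / (6 * y ^ 3)

lemma trigammaMajorant_nonneg {y : ℝ} (hy : 0 < y) : 0 ≤ trigammaMajorant y := by
  unfold trigammaMajorant; positivity

lemma trigammaMajorant_sub_succ {y : ℝ} (hy : 0 < y) :
    trigammaMajorant y - trigammaMajorant (y + 1) = 1 / y ^ 2 + 1 / (6 * y ^ 3 * (y + 1) ^ 3) := by
  unfold trigammaMajorant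
  field_simp
  ring

lemma one_div_sq_lt_trigammaMajorant_sub_succ {y : ℝ} (hy : 0 < y) :
    1 / y ^ 2 < trigammaMajorant y - trigammaMajorant (y + 1) := by
  rw [trigammaMajorant_sub_succ hy, lt_add_iff_pos_right]
  positivity

section Telescoping

variable {g : ℕ → ℝ}

lemma sum_range_sub_succ_le (hg : ∀ n, 0 ≤ g n) (n : ℕ) :
    ∑ k ∈ Finset.range n, (g k - g (k + 1)) ≤ g 0 := by
  rw [Finset.sum_range_sub']
  linarith [hg n]

lemma summable_sub_succ_of_antitone (hanti : Antitone g) (hg : ∀ n, 0 ≤ g n) :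
    Summable fun k => g k - g (k + 1) :=
  summable_of_sum_range_le (fun k => sub_nonneg.2 (hanti k.le_succ)) (sum_range_sub_succ_le hg)

lemma tsum_sub_succ_le_of_antitone (hanti : Antitone g) (hg : ∀ n, 0 ≤ g n) :
    ∑' k, (g k - g (k + 1)) ≤ g 0 :=
  Real.tsum_le_of_sum_range_le (fun k => sub_nonneg.2 (hanti k.le_succ)) (sum_range_sub_succ_le hg)

end Telescoping

theorem stmt_4 (x : ℝ) (hx : 0 < x) :
    ∑' k : ℕ, 1 / (x + (k : ℝ)) ^ 2 < 1 / x + 1 / (2 * x ^ 2) + 1 / (6 * x ^ 3) := by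
  set g : ℕ → ℝ := fun k => trigammaMajorant (x + k) with hg_def
  have hterm (k : ℕ) : 1 / (x + k) ^ 2 < g k - g (k + 1) := by
    simpa [hg_def, add_assoc] using one_div_sq_lt_trigammaMajorant_sub_succ (y := x + k) (by positivity)
  have hnonneg (k : ℕ) : 0 ≤ g k := trigammaMajorant_nonneg (by positivity)
  have hanti : Antitone g :=
    antitone_nat_of_succ_le fun k => by linarith [hterm k, one_div_nonneg.2 (sq_nonneg (x + k))]
  calc ∑' k : ℕ, 1 / (x + (k : ℝ)) ^ 2
      < ∑' k, (g k - g (k + 1)) :=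
        (summable_sub_succ_of_antitone hanti hnonneg).tsum_lt_tsum_of_nonneg (i := 0)
          (fun k => by positivity) (fun k => (hterm k).le) (hterm 0)
    _ ≤ g 0 := tsum_sub_succ_le_of_antitone hanti hnonneg
    _ = 1 / x + 1 / (2 * x ^ 2) + 1 / (6 * x ^ 3) := by simp [hg_def, trigammaMajorant]
end

section
/- It holds that P(0) = 1/r + ε where ε = β(r−β)/(2^{2(m+ℓ)}·r) satisfies 0 ≤ ε < 1/2^{m+2ℓ}. -/
theorem stmt_6 (r m ℓ : ℕ) (hr : 2 ≤ r) (hm : 1 ≤ m) (hℓ : 1 ≤ ℓ) (hrm : r < 2 ^ m)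
    (β : ℝ) (hβ : β = ((2 ^ (m + ℓ) % r : ℕ) : ℝ)) :
    ShorP r m ℓ 0 = 1 / (r : ℝ) + β * ((r : ℝ) - β) / (2 ^ (2 * (m + ℓ)) * (r : ℝ)) ∧
      0 ≤ β * ((r : ℝ) - β) / (2 ^ (2 * (m + ℓ)) * (r : ℝ)) ∧
      β * ((r : ℝ) - β) / (2 ^ (2 * (m + ℓ)) * (r : ℝ)) < 1 / 2 ^ (m + 2 * ℓ) := by
  have hr0 : (0:ℝ) < r := by positivity
  have hr2 : (2:ℝ) ≤ r := by exact_mod_cast hr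
  set L : ℝ := ((2 ^ (m + ℓ) / r : ℕ) : ℝ) with hL
  have hdm : L * r + β = 2 ^ (m + ℓ) := by
    rw [hβ, hL]
    exact_mod_cast Nat.div_add_mod' (2 ^ (m + ℓ)) r
  have hβ0 : 0 ≤ β := by rw [hβ]; exact Nat.cast_nonneg _
  have hβr : β < r := by
    rw [hβ]
    exact_mod_cast Nat.mod_lt _ (by omega)
  have hsq : (2:ℝ) ^ (2 * (m + ℓ)) = (L * r + β) ^ 2 := by
    rw [hdm, ← pow_mul, mul_comm]
  have hD0 : (0:ℝ) < 2 ^ (2 * (m + ℓ)) := by positivity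
  have hP0 : ShorP r m ℓ 0 = (L ^ 2 * r + (2 * L + 1) * β) / 2 ^ (2 * (m + ℓ)) := by
    rw [ShorP]
    simp only [if_pos rfl, if_true, reduceIte]
    rw [← hβ, ← hL]
  refine ⟨?_, div_nonneg (mul_nonneg hβ0 (by linarith)) (by positivity), ?_⟩
  · rw [hP0,
      show L ^ 2 * r + (2 * L + 1) * β
          = 2 ^ (2 * (m + ℓ)) / r + β * ((r:ℝ) - β) / r from by
        rw [hsq]; field_simp; ring]
    field_simp
  · rw [div_lt_div_iff₀ (by positivity) (by positivity)]
    have h2 : (2:ℝ) ^ (2 * (m + ℓ)) = 2 ^ (m + 2 * ℓ) * 2 ^ m := by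
      rw [← pow_add]; ring_nf
    have hrm' : (r:ℝ) < 2 ^ m := by exact_mod_cast hrm
    have hp2 : (0:ℝ) < 2 ^ (m + 2 * ℓ) := by positivity
    rw [h2]
    nlinarith [mul_nonneg (sq_nonneg (2 * β - r)) hp2.le,
      mul_lt_mul_of_pos_left hrm' (mul_pos hp2 hr0)]
end

section
/- Let r and m be positive integers with 2 ≤ r < 2^m, and let c ≥ 1 be a real number with c·m > 1. Then the number of integers z with 0 ≤ z < r for which there exists a prime q and an integer e ≥ 1 such that q^e > c·m and q^e divides gcd(r, z) is less than r/(c·log₂(c·m)). Equivalently, for z selected uniformly at random from {0, 1, ..., r−1}, the probability that no prime power greater than c·m divides gcd(r, z) is greater than 1 − 1/(c·log₂(c·m)). -/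
open Finset

lemma card_multiples_le' (n d : ℕ) (hd : 0 < d) (hdn : d ∣ n) :
    ((range n).filter (fun z => d ∣ z)).card ≤ n / d := by
  classical
  have h : (range n).filter (fun z => d ∣ z) ⊆ (range (n / d)).image (· * d) := by
    intro z hz
    simp only [mem_filter, mem_range] at hz
    obtain ⟨hzn, k, hk⟩ := hz
    subst hk
    exact mem_image.2 ⟨k, mem_range.2 ((Nat.lt_div_iff_mul_lt' hdn k).2 hzn), mul_comm k d⟩
  calc ((range n).filter (fun z => d ∣ z)).card
      ≤ ((range (n / d)).image (· * d)).card := card_le_card h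
    _ ≤ (range (n / d)).card := card_image_le
    _ = n / d := card_range _

theorem stmt_9 (r m : ℕ) (hr : 2 ≤ r) (hm : 1 ≤ m) (hrm : r < 2 ^ m)
    (c : ℝ) (hc : 1 ≤ c) (hcm : 1 < c * m) :
    (({z : ℕ | z < r ∧ ∃ q e : ℕ, q.Prime ∧ 1 ≤ e ∧
          c * m < (q ^ e : ℝ) ∧ q ^ e ∣ Nat.gcd r z}.ncard : ℝ)) <
      (r : ℝ) / (c * Real.logb 2 (c * m)) := by
  classical
  set L : ℝ := c * m with hLdef
  have hL1 : 1 < L := hcm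
  have hL0 : 0 < L := by linarith
  have hr0 : 0 < r := by omega
  have hc0 : 0 < c := by linarith
  have hlg : 0 < Real.logb 2 L := Real.logb_pos (by norm_num) hL1
  set f : ℕ → ℕ := fun q => Nat.clog q (⌊L⌋₊ + 1) with hf
  have hfpow : ∀ q : ℕ, 2 ≤ q → L < ((q ^ f q : ℕ) : ℝ) := by
    intro q hq
    have h1 : ⌊L⌋₊ + 1 ≤ q ^ f q := Nat.le_pow_clog (by omega) _
    calc L < (⌊L⌋₊ + 1 : ℕ) := by exact_mod_cast Nat.lt_floor_add_one L
      _ ≤ ((q ^ f q : ℕ) : ℝ) := by exact_mod_cast h1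
  have hfmin : ∀ q e : ℕ, 2 ≤ q → L < ((q ^ e : ℕ) : ℝ) → f q ≤ e := by
    intro q e hq hLe
    have h1 : ⌊L⌋₊ < q ^ e := (Nat.floor_lt hL0.le).2 hLe
    exact (Nat.clog_le_iff_le_pow (b := q) (x := ⌊L⌋₊ + 1) (y := e) (by omega)).2 (by omega)
  set S : Finset ℕ := r.primeFactors.filter (fun q => q ^ f q ∣ r) with hS
  set BF : Finset ℕ := (range r).filter (fun z => ∃ q e : ℕ, q.Prime ∧ 1 ≤ e ∧
      c * m < (q ^ e : ℝ) ∧ q ^ e ∣ Nat.gcd r z) with hBF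
  have hset : {z : ℕ | z < r ∧ ∃ q e : ℕ, q.Prime ∧ 1 ≤ e ∧
      c * m < (q ^ e : ℝ) ∧ q ^ e ∣ Nat.gcd r z} = ↑BF := by
    ext z
    simp [hBF, Finset.mem_filter, Finset.mem_range]
  rw [hset, Set.ncard_coe_finset]
  -- BF is contained in the union over S
  have hsub : BF ⊆ S.biUnion (fun q => (range r).filter (fun z => q ^ f q ∣ z)) := by
    intro z hz
    simp only [hBF, mem_filter, mem_range] at hz
    obtain ⟨hzr, q, e, hq, he, hLe, hdvd⟩ := hz
    have hq2 : 2 ≤ q := hq.two_le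
    have hLe' : L < ((q ^ e : ℕ) : ℝ) := by push_cast; push_cast at hLe; exact hLe
    have hfe : f q ≤ e := hfmin q e hq2 hLe'
    have hdr : q ^ f q ∣ r := (pow_dvd_pow q hfe).trans (hdvd.trans (Nat.gcd_dvd_left r z))
    have hdz : q ^ f q ∣ z := (pow_dvd_pow q hfe).trans (hdvd.trans (Nat.gcd_dvd_right r z))
    have hqr : q ∣ r := dvd_trans (dvd_pow_self q (by omega : e ≠ 0)) (hdvd.trans (Nat.gcd_dvd_left r z))
    have hqS : q ∈ S := by
      simp only [hS, mem_filter, Nat.mem_primeFactors]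
      exact ⟨⟨hq, hqr, by omega⟩, hdr⟩
    exact mem_biUnion.2 ⟨q, hqS, by simp [mem_filter, mem_range, hzr, hdz]⟩
  -- properties of elements of S
  have hSq : ∀ q ∈ S, 2 ≤ q ∧ q ^ f q ∣ r := by
    intro q hq
    simp only [hS, mem_filter, Nat.mem_primeFactors] at hq
    exact ⟨hq.1.1.two_le, hq.2⟩
  -- card bound
  have hcard : BF.card ≤ ∑ q ∈ S, r / q ^ f q := by
    calc BF.card ≤ (S.biUnion (fun q => (range r).filter (fun z => q ^ f q ∣ z))).card :=
          card_le_card hsub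
      _ ≤ ∑ q ∈ S, ((range r).filter (fun z => q ^ f q ∣ z)).card := card_biUnion_le
      _ ≤ ∑ q ∈ S, r / q ^ f q := by
          refine sum_le_sum fun q hq => ?_
          obtain ⟨hq2, hdr⟩ := hSq q hq
          exact card_multiples_le' r _ (pow_pos (by omega) _) hdr
  -- product of prime powers over S divides r
  have hprod : ∏ q ∈ S, q ^ f q ∣ r := by
    have h1 : ∏ q ∈ S, q ^ f q ∣ ∏ q ∈ S, q ^ r.factorization q := by
      refine prod_dvd_prod_of_dvd _ _ fun q hq => ?_
      obtain ⟨hq2, hdr⟩ := hSq q hq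
      have hqp : q.Prime := by
        simp only [hS, mem_filter, Nat.mem_primeFactors] at hq
        exact hq.1.1
      exact pow_dvd_pow q ((Nat.Prime.pow_dvd_iff_le_factorization hqp (by omega)).1 hdr)
    have h2 : ∏ q ∈ S, q ^ r.factorization q ∣ ∏ q ∈ r.primeFactors, q ^ r.factorization q :=
      prod_dvd_prod_of_subset _ _ _ (filter_subset _ _)
    have h3 : ∏ q ∈ r.primeFactors, q ^ r.factorization q = r := by
      rw [← Nat.support_factorization]
      exact Nat.factorization_prod_pow_eq_self (by omega)
    exact h1.trans (h2.trans (dvd_of_eq h3))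
  set k : ℕ := S.card with hk
  -- L ^ k ≤ r
  have hLk : L ^ k ≤ (r : ℝ) := by
    calc L ^ k = ∏ _q ∈ S, L := by rw [prod_const, hk]
      _ ≤ ∏ q ∈ S, ((q ^ f q : ℕ) : ℝ) := by
          refine prod_le_prod (fun _ _ => hL0.le) fun q hq => (hfpow q (hSq q hq).1).le
      _ = ((∏ q ∈ S, q ^ f q : ℕ) : ℝ) := by push_cast; ring
      _ ≤ (r : ℝ) := by exact_mod_cast Nat.le_of_dvd hr0 hprod
  -- k * logb 2 L < m
  have hklog : (k : ℝ) * Real.logb 2 L < m := by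
    have h1 : L ^ k < (2 : ℝ) ^ m := lt_of_le_of_lt hLk (by exact_mod_cast hrm)
    have h2 : Real.logb 2 (L ^ k) < Real.logb 2 ((2 : ℝ) ^ m) :=
      Real.logb_lt_logb (by norm_num) (pow_pos hL0 k) h1
    rwa [Real.logb_pow, Real.logb_pow, Real.logb_self_eq_one (by norm_num),
      mul_one] at h2
  have hkle : (k : ℝ) ≤ m / Real.logb 2 L := by
    rw [le_div_iff₀ hlg]; exact hklog.le
  have hrhs : (m / Real.logb 2 L) * ((r : ℝ) / L) = (r : ℝ) / (c * Real.logb 2 L) := by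
    rw [hLdef]
    have hm0 : (0 : ℝ) < m := by exact_mod_cast hm
    field_simp
  by_cases hSne : S.Nonempty
  · have hsum : (∑ q ∈ S, (↑(r / q ^ f q) : ℝ)) < ∑ q ∈ S, (r : ℝ) / L := by
      refine sum_lt_sum_of_nonempty hSne fun q hq => ?_
      obtain ⟨hq2, _⟩ := hSq q hq
      calc (↑(r / q ^ f q) : ℝ) ≤ (r : ℝ) / ((q ^ f q : ℕ) : ℝ) := Nat.cast_div_le
        _ < (r : ℝ) / L := by
            apply div_lt_div_of_pos_left (by exact_mod_cast hr0) hL0 (hfpow q hq2)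
    have h1 : (BF.card : ℝ) ≤ ∑ q ∈ S, (↑(r / q ^ f q) : ℝ) := by exact_mod_cast hcard
    have h2 : ∑ q ∈ S, (r : ℝ) / L = (k : ℝ) * ((r : ℝ) / L) := by
      rw [sum_const, hk, nsmul_eq_mul]
    have h3 : (k : ℝ) * ((r : ℝ) / L) ≤ (m / Real.logb 2 L) * ((r : ℝ) / L) := by
      refine mul_le_mul_of_nonneg_right hkle (by positivity)
    calc (BF.card : ℝ) ≤ ∑ q ∈ S, (↑(r / q ^ f q) : ℝ) := h1
      _ < ∑ q ∈ S, (r : ℝ) / L := hsum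
      _ = (k : ℝ) * ((r : ℝ) / L) := h2
      _ ≤ (m / Real.logb 2 L) * ((r : ℝ) / L) := h3
      _ = (r : ℝ) / (c * Real.logb 2 L) := hrhs
  · have hS0 : S = ∅ := not_nonempty_iff_eq_empty.1 hSne
    have : BF.card = 0 := by
      have := hcard
      rw [hS0, sum_empty] at this
      omega
    rw [this]
    have : (0 : ℝ) < (r : ℝ) / (c * Real.logb 2 L) := by positivity
    exact_mod_cast this
end

section
/- Let r, m, ℓ be positive integers with r ≥ 2, 2^m > r and 2^{m+ℓ} > r². For an integer z with 0 ≤ z < r, let j₀(z) = ⌊2^{m+ℓ}·z/r⌉ (the nearest integer, ties rounded up) and let d = gcd(r, z). Then |j₀(z)/2^{m+ℓ} − z/r| ≤ 1/(2·2^{m+ℓ}), the reduced denominator r/d satisfies r/d < 2^{(m+ℓ)/2}, and z/r is the unique rational number p/q in lowest terms with 0 < q < 2^{(m+ℓ)/2} satisfying |j₀(z)/2^{m+ℓ} − p/q| ≤ 1/(2·2^{m+ℓ}). -/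
theorem stmt_12 (r m ℓ : ℕ) (hr : 2 ≤ r) (hm : 0 < m) (hℓ : 0 < ℓ)
    (hrm : r < 2 ^ m) (hrml : r ^ 2 < 2 ^ (m + ℓ))
    (z : ℕ) (hz : z < r)
    (j₀ : ℤ) (hj₀ : j₀ = round ((2 ^ (m + ℓ) * (z : ℝ)) / (r : ℝ)))
    (d : ℕ) (hd : d = Nat.gcd r z) :
    |((j₀ : ℝ) / 2 ^ (m + ℓ)) - (z : ℝ) / (r : ℝ)| ≤ 1 / (2 * 2 ^ (m + ℓ)) ∧
      ((r / d : ℕ) : ℝ) < Real.sqrt (2 ^ (m + ℓ)) ∧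
      ∀ p q : ℤ, 0 < q → (q : ℝ) < Real.sqrt (2 ^ (m + ℓ)) → IsCoprime p q →
        |((j₀ : ℝ) / 2 ^ (m + ℓ)) - (p : ℝ) / (q : ℝ)| ≤ 1 / (2 * 2 ^ (m + ℓ)) →
        (p : ℝ) / (q : ℝ) = (z : ℝ) / (r : ℝ) := by
  have hN : (0:ℝ) < 2 ^ (m + ℓ) := by positivity
  have hr0 : 0 < r := lt_of_lt_of_le two_pos hr
  have hrR : (0:ℝ) < r := by exact_mod_cast hr0
  have hrmlR : (r:ℝ) ^ 2 < 2 ^ (m + ℓ) := by exact_mod_cast hrml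
  have hrs : (r:ℝ) < Real.sqrt (2 ^ (m + ℓ)) :=
    (Real.lt_sqrt (le_of_lt hrR)).mpr hrmlR
  set x : ℝ := (2 ^ (m + ℓ) * (z : ℝ)) / (r : ℝ) with hxdef
  have hx : (z:ℝ)/r = x / 2 ^ (m + ℓ) := by
    rw [hxdef]; field_simp
  have h1 : |((j₀ : ℝ) / 2 ^ (m + ℓ)) - (z : ℝ) / (r : ℝ)| ≤ 1 / (2 * 2 ^ (m + ℓ)) := by
    rw [hj₀, hx]
    calc |((round x : ℤ):ℝ) / 2 ^ (m + ℓ) - x / 2 ^ (m + ℓ)|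
        = |((round x : ℤ):ℝ) - x| / 2 ^ (m + ℓ) := by
          rw [div_sub_div_same, abs_div, abs_of_pos hN]
      _ ≤ (1/2) / 2 ^ (m + ℓ) := by gcongr; rw [abs_sub_comm]; exact abs_sub_round x
      _ = 1 / (2 * 2 ^ (m + ℓ)) := by ring
  refine ⟨h1, ?_, ?_⟩
  · calc ((r / d : ℕ) : ℝ) ≤ (r : ℝ) := by exact_mod_cast Nat.div_le_self r d
      _ < _ := hrs
  · intro p q hq hqN hcop hpq
    by_contra hne
    have hqR : (0:ℝ) < (q:ℝ) := by exact_mod_cast hq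
    have hne' : (p * (r:ℤ) - q * (z:ℤ)) ≠ 0 := by
      intro h
      apply hne
      have h' : (p:ℝ) * r = q * z := by
        have := sub_eq_zero.mp h
        exact_mod_cast this
      rw [div_eq_div_iff hqR.ne' hrR.ne']
      linarith [h']
    have h1le : (1:ℝ) ≤ |((p * (r:ℤ) - q * (z:ℤ) : ℤ):ℝ)| := by
      exact_mod_cast Int.one_le_abs hne'
    have hdiff : (p:ℝ)/q - (z:ℝ)/r = ((p * (r:ℤ) - q * (z:ℤ) : ℤ):ℝ)/((q:ℝ)*r) := by
      push_cast
      field_simp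
      try ring
    have hqr : (q:ℝ) * r < 2 ^ (m + ℓ) := by
      have := mul_lt_mul'' hqN hrs (le_of_lt hqR) (le_of_lt hrR)
      rwa [Real.mul_self_sqrt (le_of_lt hN)] at this
    have hlow : 1 / ((2:ℝ) ^ (m + ℓ)) < |(p:ℝ)/q - (z:ℝ)/r| := by
      rw [hdiff, abs_div, abs_of_pos (mul_pos hqR hrR)]
      have hqrpos : (0:ℝ) < (q:ℝ)*r := mul_pos hqR hrR
      rw [div_lt_div_iff₀ hN hqrpos]
      nlinarith [abs_nonneg (((p * (r:ℤ) - q * (z:ℤ) : ℤ):ℝ))]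
    have htri : |(p:ℝ)/q - (z:ℝ)/r| ≤ 1 / 2 ^ (m + ℓ) := by
      have := abs_sub_abs_le_abs_sub ((p:ℝ)/q) ((z:ℝ)/r)
      calc |(p:ℝ)/q - (z:ℝ)/r|
          ≤ |(p:ℝ)/q - (j₀:ℝ)/2^(m+ℓ)| + |(j₀:ℝ)/2^(m+ℓ) - (z:ℝ)/r| := abs_sub_le _ _ _
        _ ≤ 1 / (2 * 2 ^ (m + ℓ)) + 1 / (2 * 2 ^ (m + ℓ)) := by
            rw [abs_sub_comm]
            exact add_le_add hpq h1
        _ = 1 / 2 ^ (m + ℓ) := by ring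
    linarith
end

section
/- Let 𝓛 ⊂ ℝ² be the set of all integer linear combinations of two ℝ-linearly independent vectors. Let s₁ be a nonzero vector of 𝓛 of minimal Euclidean norm λ₁, and let s₂ be a vector of 𝓛, of minimal Euclidean norm λ₂ among all vectors of 𝓛 that are linearly independent of s₁. Write s₂ = s₂^∥ + s₂^⊥ where s₂^∥ is the orthogonal projection of s₂ onto the line spanned by s₁ and s₂^⊥ is orthogonal to s₁. Then ‖s₂^∥‖ ≤ λ₁/2 and ‖s₂^⊥‖ ≥ (√3/2)·λ₂. -/
/-- The Euclidean norm on `ℝ × ℝ`. -/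
noncomputable def enorm2 (v : ℝ × ℝ) : ℝ :=
  Real.sqrt (v.1 ^ 2 + v.2 ^ 2)

theorem stmt_15 (b₁ b₂ : ℝ × ℝ) (hind : LinearIndependent ℝ ![b₁, b₂])
    (L : Set (ℝ × ℝ)) (hL : L = {v | ∃ a b : ℤ, v = (a : ℝ) • b₁ + (b : ℝ) • b₂})
    (s₁ : ℝ × ℝ) (hs₁L : s₁ ∈ L) (hs₁0 : s₁ ≠ 0)
    (hs₁min : ∀ w ∈ L, w ≠ 0 → enorm2 s₁ ≤ enorm2 w)
    (s₂ : ℝ × ℝ) (hs₂L : s₂ ∈ L) (hs₂ind : ∀ c : ℝ, s₂ ≠ c • s₁)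
    (hs₂min : ∀ w ∈ L, (∀ c : ℝ, w ≠ c • s₁) → enorm2 s₂ ≤ enorm2 w)
    (μ : ℝ) (hμ : μ = (s₂.1 * s₁.1 + s₂.2 * s₁.2) / (s₁.1 ^ 2 + s₁.2 ^ 2)) :
    enorm2 (μ • s₁) ≤ enorm2 s₁ / 2 ∧
      Real.sqrt 3 / 2 * enorm2 s₂ ≤ enorm2 (s₂ - μ • s₁) := by
  set N : ℝ := s₁.1 ^ 2 + s₁.2 ^ 2 with hNdef
  set M : ℝ := s₂.1 ^ 2 + s₂.2 ^ 2 with hMdef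
  have hs₁ne : s₁.1 ≠ 0 ∨ s₁.2 ≠ 0 := by
    by_contra h
    push_neg at h
    exact hs₁0 (Prod.ext h.1 h.2)
  have hN0 : 0 < N := by
    rcases hs₁ne with h | h <;> positivity
  have hinner : s₂.1 * s₁.1 + s₂.2 * s₁.2 = μ * N := by
    rw [hμ]
    field_simp
  have hs₂0 : s₂ ≠ 0 := by
    intro h
    exact hs₂ind 0 (by simp [h])
  -- k = nearest integer to μ
  set k : ℤ := round μ with hk
  have hkL : s₂ - (k : ℝ) • s₁ ∈ L := by
    rw [hL] at hs₁L hs₂L ⊢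
    obtain ⟨a, b, h1⟩ := hs₁L
    obtain ⟨c, d, h2⟩ := hs₂L
    exact ⟨c - k * a, d - k * b, by push_cast; rw [h1, h2]; module⟩
  have hkind : ∀ c : ℝ, s₂ - (k : ℝ) • s₁ ≠ c • s₁ := by
    intro c h
    apply hs₂ind (c + k)
    rw [add_smul]
    have := sub_eq_iff_eq_add.mp h
    exact this
  have hle := hs₂min _ hkL hkind
  have sq_le : ∀ x y : ℝ × ℝ, enorm2 x ≤ enorm2 y →
      x.1 ^ 2 + x.2 ^ 2 ≤ y.1 ^ 2 + y.2 ^ 2 := by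
    intro x y h
    have h2 := mul_self_le_mul_self (Real.sqrt_nonneg _) h
    simp only [enorm2] at h2
    rw [Real.mul_self_sqrt (by positivity), Real.mul_self_sqrt (by positivity)] at h2
    exact h2
  have h2 := sq_le _ _ hle
  simp only [Prod.fst_sub, Prod.snd_sub, Prod.smul_fst, Prod.smul_snd, smul_eq_mul] at h2
  -- from minimality: 0 ≤ k^2 - 2kμ, i.e. μ² ≤ (μ - k)²
  have h3 : (s₂.1 - (k : ℝ) * s₁.1) ^ 2 + (s₂.2 - (k : ℝ) * s₁.2) ^ 2
      = M - 2 * (k : ℝ) * μ * N + (k : ℝ) ^ 2 * N := by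
    linear_combination (-2 * (k : ℝ)) * hinner
  rw [h3] at h2
  have hkey : μ ^ 2 ≤ (μ - (k : ℝ)) ^ 2 := by nlinarith [h2, hN0]
  have hround : |μ - (k : ℝ)| ≤ 1 / 2 := by
    rw [hk]
    exact abs_sub_round μ
  have hmu2 : μ ^ 2 ≤ 1 / 4 := by
    nlinarith [sq_abs (μ - (k : ℝ)), hround, abs_nonneg (μ - (k : ℝ))]
  have hNM : N ≤ M := by
    have := sq_le _ _ (hs₁min s₂ hs₂L hs₂0)
    exact this
  constructor
  · have e1 : enorm2 (μ • s₁) = Real.sqrt (μ ^ 2 * N) := by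
      simp only [enorm2, Prod.smul_fst, Prod.smul_snd, smul_eq_mul]
      ring_nf
      rw [hNdef, mul_add]
    have e2 : enorm2 s₁ / 2 = Real.sqrt (N * (1 / 2) ^ 2) := by
      rw [Real.sqrt_mul hN0.le, Real.sqrt_sq (by norm_num), enorm2, ← hNdef]
      ring
    rw [e1, e2]
    apply Real.sqrt_le_sqrt
    nlinarith
  · have e3 : enorm2 (s₂ - μ • s₁) = Real.sqrt (M - μ ^ 2 * N) := by
      simp only [enorm2, Prod.fst_sub, Prod.snd_sub, Prod.smul_fst, Prod.smul_snd,
        smul_eq_mul]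
      congr 1
      linear_combination (-2 * μ) * hinner
    have e4 : Real.sqrt 3 / 2 * enorm2 s₂ = Real.sqrt (3 / 4 * M) := by
      rw [show (3 / 4 : ℝ) * M = 3 * ((1 / 2) ^ 2 * M) by ring,
        Real.sqrt_mul (by norm_num), Real.sqrt_mul (by positivity),
        Real.sqrt_sq (by norm_num)]
      rw [enorm2, ← hMdef]
      ring
    rw [e3, e4]
    apply Real.sqrt_le_sqrt
    nlinarith [hN0.le, hmu2, hNM, sq_nonneg μ]
end

section
/- Let r, m, ℓ be positive integers with r ≥ 2, and let t ≥ 1 be an integer. Then the number of integers j with 0 ≤ j < 2^{m+ℓ} such that 2^{t−1} ≤ |{r·j}_{2^{m+ℓ}}| < 2^t is at most 2^t. -/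
/-- `{u}_N`: the representative of `u` modulo `N` constrained to `[-N/2, N/2)`. -/
def smod (u N : ℤ) : ℤ :=
  (u + N / 2) % N - N / 2

lemma smod_eq_sub (u N : ℤ) : smod u N = u - N * ((u + N / 2) / N) := by
  unfold smod
  rw [Int.emod_def]
  ring

theorem stmt_16 (r m ℓ : ℕ) (hr : 2 ≤ r) (hm : 0 < m) (hℓ : 0 < ℓ)
    (t : ℕ) (ht : 1 ≤ t) :
    ((Finset.range (2 ^ (m + ℓ))).filter (fun j : ℕ =>
        (2 : ℤ) ^ (t - 1) ≤ |smod ((r : ℤ) * (j : ℤ)) ((2 : ℤ) ^ (m + ℓ))| ∧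
          |smod ((r : ℤ) * (j : ℤ)) ((2 : ℤ) ^ (m + ℓ))| < (2 : ℤ) ^ t)).card ≤
      2 ^ t := by
  set n := m + ℓ with hn
  set N : ℤ := (2:ℤ)^n with hN
  obtain ⟨a, b, hb, hrab⟩ := Nat.exists_eq_two_pow_mul_odd (show r ≠ 0 by omega)
  set a' := min a n with ha'
  have ha'n : a' ≤ n := min_le_right _ _
  have hdvd : ∀ j : ℕ, (2:ℤ)^a' ∣ smod ((r:ℤ)*j) N := by
    intro j
    rw [smod_eq_sub]
    have h1 : (2:ℤ)^a' ∣ (r:ℤ)*j := by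
      refine Dvd.dvd.mul_right ?_ _
      have h2 : (2:ℤ)^a' ∣ (2:ℤ)^a := pow_dvd_pow _ (min_le_left _ _)
      exact h2.trans ⟨b, by push_cast [hrab]; ring⟩
    have h2 : (2:ℤ)^a' ∣ N := pow_dvd_pow _ ha'n
    exact dvd_sub h1 (h2.mul_right _)
  by_cases hta : t ≤ a'
  · -- the filter is empty
    have : ((Finset.range (2 ^ n)).filter (fun j : ℕ =>
        (2 : ℤ) ^ (t - 1) ≤ |smod ((r : ℤ) * (j : ℤ)) N| ∧
          |smod ((r : ℤ) * (j : ℤ)) N| < (2 : ℤ) ^ t)).card = 0 := by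
      rw [Finset.card_eq_zero, Finset.filter_eq_empty_iff]
      rintro j -
      rintro ⟨h1, h2⟩
      set v := smod ((r:ℤ)*j) N with hv
      have hvne : v ≠ 0 := by
        intro h
        rw [h, abs_zero] at h1
        have := pow_pos (show (0:ℤ) < 2 by norm_num) (t-1)
        linarith
      have hd : (2:ℤ)^t ∣ |v| := (dvd_abs _ _).mpr ((pow_dvd_pow _ hta).trans (hdvd j))
      have := Int.le_of_dvd (abs_pos.mpr hvne) hd
      linarith
    rw [this]; exact Nat.zero_le _
  · push_neg at hta
    have hat : a' ≤ t - 1 := by omega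
    set c := t - 1 - a' with hc
    have htc : t = c + 1 + a' := by omega
    set T : Finset (ℤ × Bool × ℕ) :=
      (Finset.Ico ((2:ℤ)^c) ((2:ℤ)^(c+1))) ×ˢ
        ((Finset.univ : Finset Bool) ×ˢ Finset.range (2^a')) with hT
    have hTcard : T.card = 2 ^ t := by
      rw [hT, Finset.card_product, Finset.card_product, Int.card_Ico,
        Finset.card_univ, Finset.card_range]
      have : (2:ℤ)^(c+1) - 2^c = 2^c := by ring
      rw [this]
      have : ((2:ℤ)^c).toNat = 2^c := by
        rw [show ((2:ℤ)^c) = ((2^c : ℕ) : ℤ) by push_cast; ring, Int.toNat_natCast]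
      rw [this, htc, Fintype.card_bool]
      ring
    rw [← hTcard]
    apply Finset.card_le_card_of_injOn
      (fun j : ℕ => (|smod ((r:ℤ)*j) N| / 2^a', (decide (0 ≤ smod ((r:ℤ)*j) N), j / 2^(n-a'))))
    · intro j hj
      simp only [Finset.mem_coe, Finset.mem_filter, Finset.mem_range] at hj
      obtain ⟨hjn, h1, h2⟩ := hj
      set v := smod ((r:ℤ)*j) N with hv
      have hdv : (2:ℤ)^a' ∣ |v| := (dvd_abs _ _).mpr (hdvd j)
      have hq : |v| / 2^a' * 2^a' = |v| := Int.ediv_mul_cancel hdv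
      have hpos : (0:ℤ) < 2^a' := pow_pos (by norm_num) _
      simp only [Finset.mem_coe, hT, Finset.mem_product, Finset.mem_Ico, Finset.mem_univ, Finset.mem_range,
        true_and]
      refine ⟨⟨?_, ?_⟩, ?_⟩
      · have : (2:ℤ)^c * 2^a' ≤ |v|/2^a' * 2^a' := by
          rw [hq, ← pow_add]
          rw [show c + a' = t - 1 by omega] at *
          exact h1
        exact le_of_mul_le_mul_right this hpos
      · have : |v|/2^a' * 2^a' < (2:ℤ)^(c+1) * 2^a' := by
          rw [hq, ← pow_add, show c + 1 + a' = t by omega]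
          exact h2
        exact lt_of_mul_lt_mul_right this hpos.le
      · have : j < 2^(n-a') * 2^a' := by
          rw [← pow_add, Nat.sub_add_cancel ha'n]; exact hjn
        exact Nat.div_lt_of_lt_mul this
    · intro j hj j' hj' hf
      simp only [Finset.mem_coe, Finset.mem_filter, Finset.mem_range] at hj hj'
      obtain ⟨hjn, h1, h2⟩ := hj
      obtain ⟨hjn', h1', h2'⟩ := hj'
      simp only [Prod.mk.injEq, decide_eq_decide] at hf
      obtain ⟨hq, hs, hd⟩ := hf
      set v := smod ((r:ℤ)*j) N with hv
      set v' := smod ((r:ℤ)*j') N with hv'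
      have hvne : v ≠ 0 := by
        intro h
        rw [h, abs_zero] at h1
        have := pow_pos (show (0:ℤ) < 2 by norm_num) (t-1)
        linarith
      have hvne' : v' ≠ 0 := by
        intro h
        rw [h, abs_zero] at h1'
        have := pow_pos (show (0:ℤ) < 2 by norm_num) (t-1)
        linarith
      have habs : |v| = |v'| := by
        have e1 : |v| / 2^a' * 2^a' = |v| := Int.ediv_mul_cancel ((dvd_abs _ _).mpr (hdvd j))
        have e2 : |v'| / 2^a' * 2^a' = |v'| := Int.ediv_mul_cancel ((dvd_abs _ _).mpr (hdvd j'))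
        rw [← e1, ← e2, hq]
      have hvv : v = v' := by
        by_cases h0 : 0 ≤ v
        · have h0' : 0 ≤ v' := hs.mp h0
          rwa [abs_of_nonneg h0, abs_of_nonneg h0'] at habs
        · have h0' : ¬ 0 ≤ v' := fun h => h0 (hs.mpr h)
          push_neg at h0 h0'
          rw [abs_of_neg h0, abs_of_neg h0'] at habs
          linarith
      -- from v = v' deduce 2^(n-a') ∣ j - j'
      have hmod : N ∣ (r:ℤ) * j - (r:ℤ) * j' := by
        rw [smod_eq_sub] at hv hv'
        have : (r:ℤ)*j - N * (((r:ℤ)*j + N/2)/N) = (r:ℤ)*j' - N * (((r:ℤ)*j' + N/2)/N) := by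
          rw [← hv, ← hv', hvv]
        exact ⟨((r:ℤ)*j + N/2)/N - ((r:ℤ)*j' + N/2)/N, by linarith [this]⟩
      have hkey : (2:ℤ)^(n-a') ∣ (j:ℤ) - (j':ℤ) := by
        by_cases han : n ≤ a
        · have : n - a' = 0 := by omega
          rw [this, pow_zero]; exact one_dvd _
        · push_neg at han
          have haa : a' = a := by omega
          have hrw : (r:ℤ) * j - (r:ℤ) * j' = 2^a * ((b:ℤ) * ((j:ℤ) - j')) := by
            push_cast [hrab]; ring
          rw [hrw, hN, show n = a + (n - a) by omega, pow_add] at hmod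
          have h2a : (2:ℤ)^a ≠ 0 := by positivity
          have hdv2 : (2:ℤ)^(n-a) ∣ (b:ℤ) * ((j:ℤ) - j') :=
            (mul_dvd_mul_iff_left h2a).mp hmod
          have hcop2 : IsCoprime ((2:ℤ)) (b:ℤ) := by
            rw [Int.isCoprime_iff_gcd_eq_one,
              show ((2:ℤ)) = ((2:ℕ):ℤ) by norm_num, Int.gcd_natCast_natCast]
            exact Nat.coprime_two_left.mpr hb
          have hcop : IsCoprime ((2:ℤ)^(n-a)) (b:ℤ) := hcop2.pow_left
          rw [haa]
          exact hcop.dvd_of_dvd_mul_left hdv2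
      have hmodnat : j % 2^(n-a') = j' % 2^(n-a') := by
        have := Int.emod_emod_of_dvd (0:ℤ) (dvd_refl ((2:ℤ)^(n-a')))
        have hme : (j:ℤ) % 2^(n-a') = (j':ℤ) % 2^(n-a') := Int.ModEq.symm
          ((Int.modEq_iff_dvd).mpr hkey)
        have : ((j % 2^(n-a') : ℕ) : ℤ) = ((j' % 2^(n-a') : ℕ) : ℤ) := by
          push_cast
          exact hme
        exact_mod_cast this
      have e1 := Nat.div_add_mod j (2^(n-a'))
      have e2 := Nat.div_add_mod j' (2^(n-a'))
      rw [hd, hmodnat] at e1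
      omega
end

section
/- Let r, m, ℓ be positive integers with 2 ≤ r < 2^m, and let t ≥ 1 be an integer. Then ∑_j P({r·j}_{2^{m+ℓ}}) ≤ 2^{m−t}, where the sum ranges over all integers j with 0 ≤ j < 2^{m+ℓ} such that 2^{t−1} ≤ |{r·j}_{2^{m+ℓ}}| < 2^t. -/
lemma two_pow_ediv_two {K : ℕ} (hK : 1 ≤ K) : (2:ℤ) ^ K / 2 = 2 ^ (K - 1) := by
  rw [show K = (K - 1) + 1 by omega, pow_succ]
  simp [Int.mul_ediv_cancel]

lemma smod_mem {K : ℕ} (hK : 1 ≤ K) (x : ℤ) :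
    -(2 ^ (K - 1)) ≤ smod x (2 ^ K) ∧ smod x (2 ^ K) < 2 ^ (K - 1) := by
  unfold smod
  rw [two_pow_ediv_two hK]
  have h1 : 0 ≤ (x + 2 ^ (K - 1)) % 2 ^ K := Int.emod_nonneg _ (by positivity)
  have h2 : (x + 2 ^ (K - 1)) % 2 ^ K < 2 ^ K := Int.emod_lt_of_pos _ (by positivity)
  have h3 : (2:ℤ) ^ K = 2 ^ (K - 1) + 2 ^ (K - 1) := by
    nth_rewrite 1 [show K = (K - 1) + 1 by omega]
    rw [pow_succ]; ring
  constructor <;> linarith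

lemma dvd_smod {v K : ℕ} (hvK : v + 1 ≤ K) {x : ℤ} (hx : (2:ℤ) ^ v ∣ x) :
    (2:ℤ) ^ v ∣ smod x (2 ^ K) := by
  unfold smod
  rw [two_pow_ediv_two (by omega), Int.emod_def]
  have d1 : (2:ℤ) ^ v ∣ 2 ^ (K - 1) := pow_dvd_pow 2 (by omega)
  have d2 : (2:ℤ) ^ v ∣ 2 ^ K := pow_dvd_pow 2 (by omega)
  exact dvd_sub (dvd_sub (hx.add d1) (d2.mul_right _)) d1

lemma smod_congr {K : ℕ} {x y : ℤ} (h : smod x (2 ^ K) = smod y (2 ^ K)) :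
    (2:ℤ) ^ K ∣ x - y := by
  unfold smod at h
  have h' : (x + 2 ^ K / 2) ≡ (y + 2 ^ K / 2) [ZMOD (2 ^ K)] := by
    unfold Int.ModEq
    omega
  have := (Int.ModEq.sub_right (2 ^ K / 2) h').dvd
  have e : y + 2 ^ K / 2 - (2 ^ K / 2) - (x + 2 ^ K / 2 - (2 ^ K / 2)) = y - x := by ring
  rw [e] at this
  exact (dvd_sub_comm).mp this

lemma card_filter_le (r m ℓ : ℕ) (hr : 2 ≤ r) (hm : 0 < m) (hℓ : 0 < ℓ) (hrm : r < 2 ^ m)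
    (t : ℕ) (ht : 1 ≤ t) :
    ((Finset.range (2 ^ (m + ℓ))).filter (fun j : ℕ =>
        (2 : ℤ) ^ (t - 1) ≤ |smod ((r : ℤ) * (j : ℤ)) ((2 : ℤ) ^ (m + ℓ))| ∧
          |smod ((r : ℤ) * (j : ℤ)) ((2 : ℤ) ^ (m + ℓ))| < (2 : ℤ) ^ t)).card ≤ 2 ^ t := by
  set K := m + ℓ with hK
  set v := r.factorization 2 with hv
  set u := r / 2 ^ v with hu
  have hru : r = 2 ^ v * u := (Nat.ordProj_mul_ordCompl_eq_self r 2).symm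
  have huodd : ¬ 2 ∣ u := Nat.not_dvd_ordCompl Nat.prime_two (by omega)
  have h2v : 2 ^ v ≤ r := Nat.ordProj_le 2 (by omega)
  have hvm : v < m := by
    have h' : 2 ^ v < 2 ^ m := lt_of_le_of_lt h2v hrm
    exact (Nat.pow_lt_pow_iff_right one_lt_two).mp h'
  have hvK : v + 1 ≤ K := by omega
  have hdvd : ∀ j : ℕ, (2:ℤ) ^ v ∣ smod ((r : ℤ) * j) (2 ^ K) := by
    intro j
    apply dvd_smod hvK
    exact Dvd.dvd.mul_right ⟨(u : ℤ), by exact_mod_cast hru⟩ _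
  by_cases hvt : t ≤ v
  · -- filter is empty
    have hemp : ((Finset.range (2 ^ K)).filter (fun j : ℕ =>
        (2 : ℤ) ^ (t - 1) ≤ |smod ((r : ℤ) * (j : ℤ)) ((2 : ℤ) ^ K)| ∧
          |smod ((r : ℤ) * (j : ℤ)) ((2 : ℤ) ^ K)| < (2 : ℤ) ^ t)) = ∅ := by
      rw [Finset.filter_eq_empty_iff]
      rintro j _ ⟨h1, h2⟩
      have ha0 : smod ((r : ℤ) * j) (2 ^ K) ≠ 0 := by
        intro h
        rw [h, abs_zero] at h1
        have hp : (0:ℤ) < 2 ^ (t - 1) := by positivity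
        linarith
      have hle : (2:ℤ) ^ v ≤ |smod ((r : ℤ) * j) (2 ^ K)| :=
        Int.le_of_dvd (abs_pos.mpr ha0) ((dvd_abs _ _).mpr (hdvd j))
      have : (2:ℤ) ^ t ≤ 2 ^ v := pow_le_pow_right₀ one_le_two hvt
      linarith
    rw [hemp]
    simp
  · push_neg at hvt
    have hvt' : v ≤ t - 1 := by omega
    set d : ℤ := 2 ^ (K - v) with hd
    have hdpos : (0:ℤ) < d := by positivity
    have h2vpos : (0:ℤ) < 2 ^ v := by positivity
    calc ((Finset.range (2 ^ K)).filter (fun j : ℕ =>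
        (2 : ℤ) ^ (t - 1) ≤ |smod ((r : ℤ) * (j : ℤ)) ((2 : ℤ) ^ K)| ∧
          |smod ((r : ℤ) * (j : ℤ)) ((2 : ℤ) ^ K)| < (2 : ℤ) ^ t)).card
        ≤ ((Finset.Ico ((2:ℤ)^(t-1-v)) (2^(t-v))) ×ˢ
            ((Finset.Ico (0:ℤ) (2^v)) ×ˢ ({false, true} : Finset Bool))).card := by
          refine Finset.card_le_card_of_injOn
            (fun j => (|smod ((r : ℤ) * j) (2 ^ K)| / 2 ^ v,
              ((j : ℤ) / d, decide (0 ≤ smod ((r : ℤ) * j) (2 ^ K))))) ?_ ?_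
          · -- maps to
            intro j hj
            obtain ⟨hjr, h1, h2⟩ := Finset.mem_filter.mp hj
            have hjK : j < 2 ^ K := Finset.mem_range.mp hjr
            simp only [Finset.mem_coe, Finset.mem_product, Finset.mem_Ico, Finset.mem_insert,
              Finset.mem_singleton]
            refine ⟨⟨?_, ?_⟩, ⟨?_, ?_⟩, by cases decide (0 ≤ smod ((r : ℤ) * j) (2 ^ K)) <;> simp⟩
            · rw [Int.le_ediv_iff_mul_le h2vpos, ← pow_add]
              rw [show t - 1 - v + v = t - 1 by omega]
              exact h1
            · rw [Int.ediv_lt_iff_lt_mul h2vpos, ← pow_add]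
              rw [show t - v + v = t by omega]
              exact h2
            · exact Int.ediv_nonneg (by positivity) hdpos.le
            · rw [Int.ediv_lt_iff_lt_mul hdpos, hd, ← pow_add,
                show v + (K - v) = K by omega]
              exact_mod_cast hjK
          · -- injective
            intro j₁ hj₁ j₂ hj₂ heq
            simp only [Prod.mk.injEq] at heq
            obtain ⟨e1, e2, e3⟩ := heq
            set a₁ := smod ((r : ℤ) * j₁) (2 ^ K) with ha₁
            set a₂ := smod ((r : ℤ) * j₂) (2 ^ K) with ha₂
            have d1 : (2:ℤ) ^ v ∣ |a₁| := (dvd_abs _ _).mpr (hdvd j₁)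
            have d2 : (2:ℤ) ^ v ∣ |a₂| := (dvd_abs _ _).mpr (hdvd j₂)
            have habs : |a₁| = |a₂| := by
              rw [← Int.mul_ediv_cancel' d1, ← Int.mul_ediv_cancel' d2, e1]
            have hsgn : (0 ≤ a₁) ↔ (0 ≤ a₂) := decide_eq_decide.mp e3
            have haeq : a₁ = a₂ := by
              by_cases hs : 0 ≤ a₁
              · rw [← abs_of_nonneg hs, ← abs_of_nonneg (hsgn.mp hs), habs]
              · have hs₂ : ¬ 0 ≤ a₂ := fun h => hs (hsgn.mpr h)
                have := abs_of_neg (lt_of_not_ge hs)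
                have := abs_of_neg (lt_of_not_ge hs₂)
                omega
            have hNdvd : (2:ℤ) ^ K ∣ (r : ℤ) * j₁ - (r : ℤ) * j₂ := smod_congr haeq
            have h' : (2:ℤ) ^ v * d ∣ (2:ℤ) ^ v * ((u : ℤ) * ((j₁:ℤ) - j₂)) := by
              have e4 : (2:ℤ) ^ v * d = 2 ^ K := by
                rw [hd, ← pow_add, show v + (K - v) = K by omega]
              have e5 : (2:ℤ) ^ v * ((u : ℤ) * ((j₁:ℤ) - j₂)) = (r : ℤ) * j₁ - (r : ℤ) * j₂ := by
                have : (r : ℤ) = 2 ^ v * u := by exact_mod_cast hru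
                rw [this]; ring
              rw [e4, e5]; exact hNdvd
            have h'' : d ∣ (u : ℤ) * ((j₁:ℤ) - j₂) :=
              (mul_dvd_mul_iff_left (pow_ne_zero v (two_ne_zero))).mp h'
            have hcop : IsCoprime d (u : ℤ) := by
              rw [hd]
              apply IsCoprime.pow_left
              rw [Int.isCoprime_iff_gcd_eq_one]
              have hnat : Nat.Coprime 2 u := Nat.coprime_two_left.mpr (Nat.odd_iff.mpr (by omega))
              simpa [Int.gcd] using hnat
            have hdj : d ∣ ((j₁:ℤ) - j₂) := hcop.dvd_of_dvd_mul_left h''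
            have q1 := Int.mul_ediv_add_emod (j₁:ℤ) d
            have q2 := Int.mul_ediv_add_emod (j₂:ℤ) d
            have r1 : 0 ≤ (j₁:ℤ) % d := Int.emod_nonneg _ hdpos.ne'
            have r2 : (j₁:ℤ) % d < d := Int.emod_lt_of_pos _ hdpos
            have r3 : 0 ≤ (j₂:ℤ) % d := Int.emod_nonneg _ hdpos.ne'
            have r4 : (j₂:ℤ) % d < d := Int.emod_lt_of_pos _ hdpos
            rw [← e2] at q2
            have hsmall : |(j₁:ℤ) - j₂| < d := by
              rw [abs_lt]; constructor <;> linarith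
            have : (j₁:ℤ) - j₂ = 0 := Int.eq_zero_of_abs_lt_dvd hdj hsmall
            exact_mod_cast sub_eq_zero.mp this
      _ = 2 ^ t := by
          rw [Finset.card_product, Finset.card_product, Int.card_Ico, Int.card_Ico]
          have e1 : (2:ℤ)^(t-v) - 2^(t-1-v) = ((2^(t-1-v) : ℕ) : ℤ) := by
            push_cast
            rw [show t - v = (t-1-v) + 1 by omega, pow_succ]
            ring
          have e2 : (2:ℤ)^v - 0 = ((2^v : ℕ) : ℤ) := by push_cast; ring
          rw [e1, e2, Int.toNat_natCast, Int.toNat_natCast]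
          have : ({false, true} : Finset Bool).card = 2 := by decide
          rw [this, ← pow_succ, ← pow_add]
          congr 1
          omega

lemma ShorP_le_bound (r m ℓ : ℕ) (hr : 1 ≤ r) (α : ℝ) (hα : α ≠ 0)
    (hle : |α| ≤ 2 ^ (m + ℓ) / 2) :
    ShorP r m ℓ α ≤ r / (4 * α ^ 2) := by
  have hπ := Real.pi_pos
  set K := m + ℓ with hK
  have hN : (0:ℝ) < 2 ^ K := by positivity
  set D : ℝ := 2 * Real.pi * α / 2 ^ K with hD
  have hDabs : |D| ≤ Real.pi := by
    have h1 : |D| = 2 * Real.pi * |α| / 2 ^ K := by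
      rw [hD, abs_div, abs_mul, abs_mul, abs_of_pos hπ, abs_of_pos two_pos, abs_of_pos hN]
    rw [h1, div_le_iff₀ hN]
    calc 2 * Real.pi * |α| ≤ 2 * Real.pi * (2 ^ K / 2) := by
          apply mul_le_mul_of_nonneg_left hle (by positivity)
      _ = Real.pi * 2 ^ K := by ring
  have hden : 8 * α ^ 2 / (2 ^ K) ^ 2 ≤ 1 - Real.cos D := by
    have h1 := Real.cos_le_one_sub_mul_cos_sq hDabs
    have h2 : 2 / Real.pi ^ 2 * D ^ 2 = 8 * α ^ 2 / (2 ^ K) ^ 2 := by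
      rw [hD]; field_simp; ring
    linarith
  have hden0 : 0 < 1 - Real.cos D := lt_of_lt_of_le (by positivity) hden
  have hnum : ∀ x : ℝ, 0 ≤ 1 - Real.cos x ∧ 1 - Real.cos x ≤ 2 := by
    intro x
    have h1 := Real.neg_one_le_cos x
    have h2 := Real.cos_le_one x
    constructor <;> linarith
  set β : ℝ := ((2 ^ K % r : ℕ) : ℝ) with hβ
  have hβ0 : 0 ≤ β := Nat.cast_nonneg _
  have hβr : β ≤ (r : ℝ) := by
    rw [hβ]
    exact_mod_cast (Nat.mod_lt _ (by omega)).le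
  simp only [ShorP, if_neg hα]
  calc β / 2 ^ (2 * K) * ((1 - Real.cos (2 * Real.pi * α * ((2 ^ K / r : ℕ) + 1) / 2 ^ K)) /
          (1 - Real.cos D)) +
      ((r : ℝ) - β) / 2 ^ (2 * K) * ((1 - Real.cos (2 * Real.pi * α * (2 ^ K / r : ℕ) / 2 ^ K)) /
          (1 - Real.cos D))
      ≤ β / 2 ^ (2 * K) * (2 / (1 - Real.cos D)) +
        ((r : ℝ) - β) / 2 ^ (2 * K) * (2 / (1 - Real.cos D)) := by
        apply add_le_add
        · apply mul_le_mul_of_nonneg_left _ (by positivity)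
          apply div_le_div_of_nonneg_right ?_ hden0.le
          exact (hnum _).2
        · apply mul_le_mul_of_nonneg_left _ (div_nonneg (by linarith) (by positivity))
          apply div_le_div_of_nonneg_right ?_ hden0.le
          exact (hnum _).2
    _ = (r : ℝ) * 2 / (2 ^ (2 * K) * (1 - Real.cos D)) := by
        field_simp
        ring
    _ ≤ (r : ℝ) * 2 / (2 ^ (2 * K) * (8 * α ^ 2 / (2 ^ K) ^ 2)) := by
        apply div_le_div_of_nonneg_left (by positivity) (by positivity)
        apply mul_le_mul_of_nonneg_left hden (by positivity)
    _ = (r : ℝ) / (4 * α ^ 2) := by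
        have h2K : (2:ℝ) ^ (2 * K) = ((2:ℝ) ^ K) ^ 2 := by rw [two_mul, pow_add, sq]
        rw [h2K]
        field_simp
        ring

theorem stmt_17 (r m ℓ : ℕ) (hr : 2 ≤ r) (hm : 0 < m) (hℓ : 0 < ℓ) (hrm : r < 2 ^ m)
    (t : ℕ) (ht : 1 ≤ t) :
    (∑ j ∈ (Finset.range (2 ^ (m + ℓ))).filter (fun j : ℕ =>
        (2 : ℤ) ^ (t - 1) ≤ |smod ((r : ℤ) * (j : ℤ)) ((2 : ℤ) ^ (m + ℓ))| ∧
          |smod ((r : ℤ) * (j : ℤ)) ((2 : ℤ) ^ (m + ℓ))| < (2 : ℤ) ^ t),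
        ShorP r m ℓ ((smod ((r : ℤ) * (j : ℤ)) ((2 : ℤ) ^ (m + ℓ)) : ℤ) : ℝ)) ≤
      (2 : ℝ) ^ ((m : ℤ) - (t : ℤ)) := by
  set K := m + ℓ with hKdef
  have hK1 : 1 ≤ K := by omega
  have hterm : ∀ j ∈ (Finset.range (2 ^ K)).filter (fun j : ℕ =>
      (2 : ℤ) ^ (t - 1) ≤ |smod ((r : ℤ) * (j : ℤ)) ((2 : ℤ) ^ K)| ∧
        |smod ((r : ℤ) * (j : ℤ)) ((2 : ℤ) ^ K)| < (2 : ℤ) ^ t),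
      ShorP r m ℓ ((smod ((r : ℤ) * (j : ℤ)) ((2 : ℤ) ^ K) : ℤ) : ℝ) ≤ (r : ℝ) / 2 ^ (2 * t) := by
    intro j hj
    obtain ⟨hjr, h1, h2⟩ := Finset.mem_filter.mp hj
    set a := smod ((r : ℤ) * j) (2 ^ K) with ha
    have ha0 : a ≠ 0 := by
      intro h
      rw [h, abs_zero] at h1
      have hp : (0:ℤ) < 2 ^ (t - 1) := by positivity
      linarith
    have hb := smod_mem hK1 ((r : ℤ) * j)
    have habs : |a| ≤ 2 ^ (K - 1) := abs_le.mpr ⟨hb.1, hb.2.le⟩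
    have hcast : |((a : ℤ) : ℝ)| ≤ 2 ^ K / 2 := by
      rw [← Int.cast_abs]
      calc ((|a| : ℤ) : ℝ) ≤ (((2:ℤ) ^ (K - 1) : ℤ) : ℝ) := by exact_mod_cast habs
        _ = 2 ^ K / 2 := by
            push_cast
            nth_rewrite 2 [show K = (K - 1) + 1 by omega]
            rw [pow_succ]
            ring
    have haR : ((a : ℤ) : ℝ) ≠ 0 := by exact_mod_cast ha0
    refine (ShorP_le_bound r m ℓ (by omega) _ haR hcast).trans ?_
    have hsq : (0:ℝ) < ((a : ℤ) : ℝ) ^ 2 := (sq_nonneg _).lt_of_ne' (pow_ne_zero 2 haR)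
    apply div_le_div_of_nonneg_left (Nat.cast_nonneg r) (by positivity)
    have h1R : (2:ℝ) ^ (t - 1) ≤ |((a : ℤ) : ℝ)| := by
      rw [← Int.cast_abs]
      exact_mod_cast h1
    have h1sq : ((2:ℝ) ^ (t - 1)) ^ 2 ≤ ((a : ℤ) : ℝ) ^ 2 := by
      rw [← sq_abs (((a : ℤ) : ℝ))]
      exact pow_le_pow_left₀ (by positivity) h1R 2
    have hpe : (4:ℝ) * ((2:ℝ) ^ (t - 1)) ^ 2 = 2 ^ (2 * t) := by
      rw [← pow_mul, show (4:ℝ) = 2 ^ 2 by norm_num, ← pow_add]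
      congr 1
      omega
    linarith
  have hsum := Finset.sum_le_card_nsmul _ _ _ hterm
  refine hsum.trans ?_
  rw [nsmul_eq_mul]
  have hcard := card_filter_le r m ℓ hr hm hℓ hrm t ht
  have hb0 : (0:ℝ) ≤ (r : ℝ) / 2 ^ (2 * t) := by positivity
  calc (((Finset.range (2 ^ K)).filter _).card : ℝ) * ((r : ℝ) / 2 ^ (2 * t))
      ≤ (2 ^ t : ℝ) * ((r : ℝ) / 2 ^ (2 * t)) := by
        apply mul_le_mul_of_nonneg_right _ hb0
        exact_mod_cast hcard
    _ = (r : ℝ) / 2 ^ t := by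
        rw [show (2:ℝ) ^ (2 * t) = 2 ^ t * 2 ^ t by rw [two_mul, pow_add]]
        have h2t : (2:ℝ) ^ t ≠ 0 := by positivity
        field_simp
    _ ≤ ((2:ℝ) ^ m) / 2 ^ t := by
        apply div_le_div_of_nonneg_right _ (by positivity : (0:ℝ) ≤ 2 ^ t)
        exact_mod_cast hrm.le
    _ = (2:ℝ) ^ ((m : ℤ) - (t : ℤ)) := by
        rw [zpow_sub₀ (two_ne_zero : (2:ℝ) ≠ 0), zpow_natCast, zpow_natCast]
end

section
/- Let r, m, ℓ be positive integers with 2^{m−1} ≤ r < 2^m, and let t ≥ 1 be an integer. Then ∑_j P({r·j}_{2^{m+ℓ}}) ≤ 2^{t+3−m}, where the sum ranges over all integers j with 0 ≤ j < 2^{m+ℓ} such that 2^{t−1} ≤ |{r·j}_{2^{m+ℓ}}| < 2^t. -/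
open Real Finset


open Real Finset

lemma one_sub_cos (x : ℝ) : 1 - Real.cos x = 2 * Real.sin (x/2)^2 := by
  have h : Real.cos (2 * (x/2)) = 2 * Real.cos (x/2)^2 - 1 := Real.cos_two_mul _
  have h2 : Real.cos (x/2)^2 = 1 - Real.sin (x/2)^2 := Real.cos_sq' _
  have : (2 : ℝ) * (x/2) = x := by ring
  rw [this] at h
  rw [h, h2]; ring

lemma abs_sin_nat_mul_le (K : ℕ) (y : ℝ) : |Real.sin (K * y)| ≤ K * |Real.sin y| := by
  induction K with
  | zero => simp
  | succ n ih =>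
    have e : ((n+1 : ℕ) : ℝ) * y = n * y + y := by push_cast; ring
    rw [e, Real.sin_add]
    calc |Real.sin (n*y) * Real.cos y + Real.cos (n*y) * Real.sin y|
        ≤ |Real.sin (n*y) * Real.cos y| + |Real.cos (n*y) * Real.sin y| := abs_add_le _ _
      _ ≤ |Real.sin (n*y)| * 1 + 1 * |Real.sin y| := by
          rw [abs_mul, abs_mul]
          gcongr <;> first | exact Real.abs_cos_le_one _ | exact abs_nonneg _
      _ ≤ (n : ℝ) * |Real.sin y| + 1 * |Real.sin y| := by
          linarith [ih]
      _ = ((n+1 : ℕ) : ℝ) * |Real.sin y| := by push_cast; ring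

lemma one_sub_cos_nat_mul_le (K : ℕ) (x : ℝ) :
    1 - Real.cos (K * x) ≤ K^2 * (1 - Real.cos x) := by
  rw [one_sub_cos, one_sub_cos]
  have harg : (K : ℝ) * x / 2 = K * (x/2) := by ring
  have h : |Real.sin (K * x / 2)| ≤ K * |Real.sin (x/2)| := by
    rw [harg]; exact abs_sin_nat_mul_le K (x/2)
  have h2 : Real.sin (K*x/2)^2 ≤ (K * |Real.sin (x/2)|)^2 := by
    rw [← sq_abs (Real.sin (K*x/2))]
    exact pow_le_pow_left₀ (abs_nonneg _) h 2
  have h3 : ((K : ℝ) * |Real.sin (x/2)|)^2 = K^2 * Real.sin (x/2)^2 := by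
    rw [mul_pow, sq_abs]
  nlinarith [h2]

lemma smod_dvd_sub (u N : ℤ) : N ∣ (u - smod u N) := by
  unfold smod
  have h : u - ((u + N/2) % N - N/2) = N * ((u + N/2)/N) := by
    rw [Int.emod_def]; ring
  rw [h]; exact Dvd.intro _ rfl

lemma smod_bounds (u : ℤ) (n : ℕ) (hn : 1 ≤ n) :
    -(2^(n-1)) ≤ smod u (2^n) ∧ smod u (2^n) < 2^(n-1) := by
  have h2 : (2:ℤ)^n = 2 * 2^(n-1) := by
    rw [← pow_succ']; congr 1; omega
  have hdiv : (2:ℤ)^n / 2 = 2^(n-1) := by omega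
  have hpos : (0:ℤ) < 2^n := by positivity
  unfold smod
  rw [hdiv]
  have h1 := Int.emod_nonneg (u + 2^(n-1)) (ne_of_gt hpos)
  have h2' := Int.emod_lt_of_pos (u + 2^(n-1)) hpos
  omega

lemma ShorP_le_Q (r m ℓ : ℕ) (hr : 0 < r) (α : ℝ)
    (hcos : α ≠ 0 → Real.cos (2 * Real.pi * α / 2^(m+ℓ)) < 1) :
    ShorP r m ℓ α ≤
      (((2^(m+ℓ)/r : ℕ) : ℝ)^2 * r + (2 * ((2^(m+ℓ)/r : ℕ) : ℝ) + 1) * ((2^(m+ℓ) % r : ℕ) : ℝ))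
        / 2^(2*(m+ℓ)) := by
  set L : ℕ := 2^(m+ℓ)/r with hL
  set β : ℕ := 2^(m+ℓ) % r with hβ
  by_cases hα : α = 0
  · simp only [ShorP, if_pos hα]
    exact le_rfl
  · simp only [ShorP, if_neg hα]
    have hD : 0 < 1 - Real.cos (2 * Real.pi * α / 2^(m+ℓ)) := by
      have := hcos hα; linarith
    set x : ℝ := 2 * Real.pi * α / 2^(m+ℓ) with hx
    have harg1 : 2 * Real.pi * α * ((L:ℝ) + 1) / 2^(m+ℓ) = ((L + 1 : ℕ) : ℝ) * x := by
      rw [hx]; push_cast; ring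
    have harg2 : 2 * Real.pi * α * (L:ℝ) / 2^(m+ℓ) = (L : ℝ) * x := by
      rw [hx]; ring
    have h1 : (1 - Real.cos (2 * Real.pi * α * ((L:ℝ) + 1) / 2^(m+ℓ))) /
        (1 - Real.cos x) ≤ ((L:ℝ)+1)^2 := by
      rw [div_le_iff₀ hD, harg1]
      have := one_sub_cos_nat_mul_le (L+1) x
      push_cast at this ⊢
      linarith
    have h2 : (1 - Real.cos (2 * Real.pi * α * (L:ℝ) / 2^(m+ℓ))) /
        (1 - Real.cos x) ≤ (L:ℝ)^2 := by
      rw [div_le_iff₀ hD, harg2]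
      have := one_sub_cos_nat_mul_le L x
      linarith
    have hβr : (β:ℝ) ≤ r := by
      exact_mod_cast (Nat.mod_lt _ hr).le
    have hP : (0:ℝ) < 2^(2*(m+ℓ)) := by positivity
    have hβ0 : (0:ℝ) ≤ β := Nat.cast_nonneg _
    calc (β:ℝ) / 2 ^ (2 * (m + ℓ)) *
          ((1 - Real.cos (2 * Real.pi * α * ((L:ℝ) + 1) / 2^(m+ℓ))) / (1 - Real.cos x)) +
        ((r : ℝ) - β) / 2 ^ (2 * (m + ℓ)) *
          ((1 - Real.cos (2 * Real.pi * α * (L:ℝ) / 2^(m+ℓ))) / (1 - Real.cos x))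
        ≤ (β:ℝ) / 2 ^ (2 * (m + ℓ)) * ((L:ℝ)+1)^2 +
            ((r : ℝ) - β) / 2 ^ (2 * (m + ℓ)) * (L:ℝ)^2 := by
          gcongr
      _ = ((L:ℝ)^2 * r + (2 * (L:ℝ) + 1) * β) / 2^(2*(m+ℓ)) := by
          field_simp; ring

lemma Q_le (r m ℓ : ℕ) (hm : 0 < m) (hr : 2^(m-1) ≤ r) (hrm : r < 2^m) :
    (((2^(m+ℓ)/r : ℕ) : ℝ)^2 * r + (2 * ((2^(m+ℓ)/r : ℕ) : ℝ) + 1) * ((2^(m+ℓ) % r : ℕ) : ℝ))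
        / 2^(2*(m+ℓ)) ≤ (2:ℝ)^(2 - (m:ℤ)) := by
  have hr0 : 0 < r := lt_of_lt_of_le (by positivity) hr
  set L : ℕ := 2^(m+ℓ)/r with hLdef
  set β : ℕ := 2^(m+ℓ) % r with hβdef
  have hLβ : r * L + β = 2^(m+ℓ) := Nat.div_add_mod _ _
  have hβr : β < r := Nat.mod_lt _ hr0
  have hrN : r ≤ 2^(m+ℓ) := le_of_lt (lt_of_lt_of_le hrm (Nat.pow_le_pow_right (by norm_num) (Nat.le_add_right m ℓ)))
  have key : (L^2 * r + (2*L+1)*β) * r ≤ 2 * (2^(m+ℓ) * 2^(m+ℓ)) := by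
    zify at hLβ hβr hrN ⊢
    have hsq : ((r:ℤ)*L + β)^2 = ((2:ℤ)^(m+ℓ))^2 := by rw [hLβ]
    have hbrN : (β:ℤ)*r ≤ (2:ℤ)^(m+ℓ) * 2^(m+ℓ) := by
      have hβ0 : (0:ℤ) ≤ β := Int.natCast_nonneg _
      have hr0' : (0:ℤ) ≤ r := Int.natCast_nonneg _
      nlinarith
    nlinarith [sq_nonneg ((β:ℤ))]
  have h2m : 2^m ≤ 2 * r := by
    have : 2^m = 2 * 2^(m-1) := by rw [← pow_succ']; congr 1; omega
    omega
  have key2 : (L^2 * r + (2*L+1)*β) * 2^m ≤ 4 * (2^(m+ℓ) * 2^(m+ℓ)) := by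
    calc (L^2 * r + (2*L+1)*β) * 2^m ≤ (L^2 * r + (2*L+1)*β) * (2*r) :=
          Nat.mul_le_mul_left _ h2m
      _ = 2 * ((L^2 * r + (2*L+1)*β) * r) := by ring
      _ ≤ 2 * (2 * (2^(m+ℓ) * 2^(m+ℓ))) := Nat.mul_le_mul_left _ key
      _ = 4 * (2^(m+ℓ) * 2^(m+ℓ)) := by ring
  have hz : (2:ℝ)^(2-(m:ℤ)) = 4 / 2^m := by
    rw [zpow_sub₀ (by norm_num : (2:ℝ) ≠ 0), zpow_natCast]; norm_num
  rw [hz, div_le_div_iff₀ (by positivity) (by positivity)]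
  have hpow : (2:ℝ)^(2*(m+ℓ)) = 2^(m+ℓ) * 2^(m+ℓ) := by
    rw [two_mul, pow_add]
  rw [hpow]
  calc ((L:ℝ)^2 * r + (2*(L:ℝ)+1) * β) * 2^m
      = (((L^2 * r + (2*L+1)*β) * 2^m : ℕ) : ℝ) := by push_cast; ring
    _ ≤ ((4 * (2^(m+ℓ) * 2^(m+ℓ)) : ℕ) : ℝ) := by exact_mod_cast key2
    _ = 4 * ((2:ℝ)^(m+ℓ) * 2^(m+ℓ)) := by push_cast; ring

theorem stmt_18 (r m ℓ : ℕ) (hr : 2 ^ (m - 1) ≤ r) (hm : 0 < m) (hℓ : 0 < ℓ) (hrm : r < 2 ^ m)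
    (t : ℕ) (ht : 1 ≤ t) :
    (∑ j ∈ (Finset.range (2 ^ (m + ℓ))).filter (fun j : ℕ =>
        (2 : ℤ) ^ (t - 1) ≤ |smod ((r : ℤ) * (j : ℤ)) ((2 : ℤ) ^ (m + ℓ))| ∧
          |smod ((r : ℤ) * (j : ℤ)) ((2 : ℤ) ^ (m + ℓ))| < (2 : ℤ) ^ t),
        ShorP r m ℓ ((smod ((r : ℤ) * (j : ℤ)) ((2 : ℤ) ^ (m + ℓ)) : ℤ) : ℝ)) ≤
      (2 : ℝ) ^ ((t : ℤ) + 3 - (m : ℤ)) := by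
  classical
  have hr0 : 0 < r := lt_of_lt_of_le (by positivity) hr
  have hmn : 1 ≤ m + ℓ := by omega
  set S := (Finset.range (2 ^ (m + ℓ))).filter (fun j : ℕ =>
        (2 : ℤ) ^ (t - 1) ≤ |smod ((r : ℤ) * (j : ℤ)) ((2 : ℤ) ^ (m + ℓ))| ∧
          |smod ((r : ℤ) * (j : ℤ)) ((2 : ℤ) ^ (m + ℓ))| < (2 : ℤ) ^ t) with hSdef
  -- pointwise bound
  have hterm : ∀ j ∈ S, ShorP r m ℓ ((smod ((r : ℤ) * (j : ℤ)) ((2 : ℤ) ^ (m + ℓ)) : ℤ) : ℝ)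
      ≤ (2:ℝ)^(2 - (m:ℤ)) := by
    intro j hj
    obtain ⟨hjr, h1, h2⟩ := Finset.mem_filter.mp hj
    set α : ℤ := smod ((r : ℤ) * (j : ℤ)) ((2 : ℤ) ^ (m + ℓ)) with hα
    have hbnd := smod_bounds ((r : ℤ) * (j : ℤ)) (m+ℓ) hmn
    have habs : |α| ≤ 2^(m+ℓ-1) := by
      rw [abs_le]; constructor <;> [exact hbnd.1; exact hbnd.2.le]
    have hα0 : α ≠ 0 := by
      intro h0
      rw [h0, abs_zero] at h1
      have : (0:ℤ) < 2^(t-1) := by positivity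
      omega
    have hcos : ((α:ℝ)) ≠ 0 → Real.cos (2*Real.pi*(α:ℝ)/2^(m+ℓ)) < 1 := by
      intro _
      rcases lt_or_eq_of_le (Real.cos_le_one (2*Real.pi*(α:ℝ)/2^(m+ℓ))) with h | h
      · exact h
      · exfalso
        obtain ⟨k, hk⟩ := (Real.cos_eq_one_iff _).mp h
        have h2π : (2:ℝ)*Real.pi ≠ 0 := by positivity
        have hN' : (2:ℝ)^(m+ℓ) ≠ 0 := by positivity
        have h3 : (k:ℝ) * 2^(m+ℓ) = (α:ℝ) := by
          have h2' : (2*Real.pi) * ((k:ℝ) * 2^(m+ℓ)) = (2*Real.pi) * (α:ℝ) := by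
            rw [mul_comm ((2:ℝ)*Real.pi) ((k:ℝ) * 2^(m+ℓ))]
            calc (k:ℝ) * 2^(m+ℓ) * (2*Real.pi) = (k * (2*Real.pi)) * 2^(m+ℓ) := by ring
              _ = (2*Real.pi*(α:ℝ)/2^(m+ℓ)) * 2^(m+ℓ) := by rw [hk]
              _ = 2*Real.pi*(α:ℝ) := by field_simp
          exact mul_left_cancel₀ h2π h2'
        have h4 : k * 2^(m+ℓ) = α := by exact_mod_cast h3
        have hk0 : k ≠ 0 := by
          intro hk0; rw [hk0] at h4; simp at h4; exact hα0 h4.symm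
        have h5 : (2:ℤ)^(m+ℓ) ≤ |α| := by
          rw [← h4, abs_mul, abs_pow]
          have : (1:ℤ) ≤ |k| := Int.one_le_abs (by exact_mod_cast hk0)
          calc (2:ℤ)^(m+ℓ) = 1 * |(2:ℤ)|^(m+ℓ) := by simp
            _ ≤ |k| * |(2:ℤ)|^(m+ℓ) := by
                apply mul_le_mul_of_nonneg_right this (by positivity)
        have h6 : (2:ℤ)^(m+ℓ) = 2 * 2^(m+ℓ-1) := by
          rw [← pow_succ']; congr 1; omega
        have : (0:ℤ) < 2^(m+ℓ-1) := by positivity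
        omega
    calc ShorP r m ℓ ((α:ℤ):ℝ) ≤ _ := ShorP_le_Q r m ℓ hr0 _ hcos
      _ ≤ (2:ℝ)^(2 - (m:ℤ)) := Q_le r m ℓ hm hr hrm
  by_cases hne : S.Nonempty
  · -- the 2-adic valuation of r
    set v : ℕ := r.factorization 2 with hv
    have hvdvd : 2^v ∣ r := Nat.ordProj_dvd r 2
    set r' : ℕ := r / 2^v with hr'
    have hodd : ¬ 2 ∣ r' := Nat.not_dvd_ordCompl Nat.prime_two hr0.ne'
    have hrr : 2^v * r' = r := Nat.ordProj_mul_ordCompl_eq_self r 2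
    have hvm : v < m := by
      have h1 : 2^v ≤ r := Nat.le_of_dvd hr0 hvdvd
      exact (Nat.pow_lt_pow_iff_right (by norm_num)).mp (lt_of_le_of_lt h1 hrm)
    -- 2^v divides every smod value
    have hdvd : ∀ j : ℕ, ((2:ℤ)^v) ∣ smod ((r : ℤ) * (j : ℤ)) ((2 : ℤ) ^ (m + ℓ)) := by
      intro j
      have hsub : ((2:ℤ)^(m+ℓ)) ∣ ((r:ℤ)*j - smod ((r:ℤ)*j) ((2:ℤ)^(m+ℓ))) :=
        smod_dvd_sub _ _
      have hd1 : ((2:ℤ)^v) ∣ ((2:ℤ)^(m+ℓ)) := pow_dvd_pow 2 (by omega)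
      have hd2 : ((2:ℤ)^v) ∣ (r:ℤ)*j := by
        apply dvd_mul_of_dvd_left
        exact_mod_cast Int.natCast_dvd_natCast.mpr hvdvd
      have := dvd_sub hd2 (hd1.trans hsub)
      simpa using this
    -- v < t
    obtain ⟨j₀, hj₀⟩ := hne
    have hvt : v < t := by
      obtain ⟨hjr, h1, h2⟩ := Finset.mem_filter.mp hj₀
      have hpos : (0:ℤ) < |smod ((r : ℤ) * (j₀ : ℤ)) ((2 : ℤ) ^ (m + ℓ))| := by
        have : (0:ℤ) < 2^(t-1) := by positivity
        omega
      have hle : (2:ℤ)^v ≤ |smod ((r : ℤ) * (j₀ : ℤ)) ((2 : ℤ) ^ (m + ℓ))| :=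
        Int.le_of_dvd hpos ((dvd_abs _ _).mpr (hdvd j₀))
      have : (2:ℤ)^v < 2^t := lt_of_le_of_lt hle h2
      exact_mod_cast (pow_lt_pow_iff_right₀ (by norm_num : (1:ℤ) < 2)).mp this
    -- the injection
    have hcard2 : S.card ≤ ((Finset.Ioo (-(2^(t-v)) : ℤ) (2^(t-v))) ×ˢ Finset.range (2^v)).card := by
      refine Finset.card_le_card_of_injOn
          (fun j => (smod ((r:ℤ)*(j:ℤ)) ((2:ℤ)^(m+ℓ)) / 2^v, j / 2^(m+ℓ-v))) ?_ ?_
      · intro j hj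
        obtain ⟨hjr, h1, h2⟩ := Finset.mem_filter.mp hj
        simp only [Finset.mem_coe, Finset.mem_product, Finset.mem_Ioo, Finset.mem_range]
        obtain ⟨c, hc⟩ := hdvd j
        refine ⟨⟨?_, ?_⟩, ?_⟩
        · rw [hc, Int.mul_ediv_cancel_left _ (by positivity)]
          have habs : (2:ℤ)^v * |c| < 2^t := by
            calc (2:ℤ)^v * |c| = |(2:ℤ)^v * c| := by
                  rw [abs_mul, abs_pow]; norm_num
              _ < 2^t := by rw [← hc]; exact h2
          have ht' : (2:ℤ)^t = 2^v * 2^(t-v) := by rw [← pow_add]; congr 1; omega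
          have hcabs : |c| < 2^(t-v) := by
            rw [ht'] at habs
            have h2v : (0:ℤ) < 2^v := by positivity
            exact lt_of_mul_lt_mul_left habs h2v.le
          have := abs_lt.mp hcabs
          linarith [this.1]
        · rw [hc, Int.mul_ediv_cancel_left _ (by positivity)]
          have habs : (2:ℤ)^v * |c| < 2^t := by
            calc (2:ℤ)^v * |c| = |(2:ℤ)^v * c| := by
                  rw [abs_mul, abs_pow]; norm_num
              _ < 2^t := by rw [← hc]; exact h2
          have ht' : (2:ℤ)^t = 2^v * 2^(t-v) := by rw [← pow_add]; congr 1; omega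
          have hcabs : |c| < 2^(t-v) := by
            rw [ht'] at habs
            have h2v : (0:ℤ) < 2^v := by positivity
            exact lt_of_mul_lt_mul_left habs h2v.le
          exact (abs_lt.mp hcabs).2
        · have hjN : j < 2^(m+ℓ) := Finset.mem_range.mp hjr
          rw [Nat.div_lt_iff_lt_mul (by positivity)]
          calc j < 2^(m+ℓ) := hjN
            _ = 2^v * 2^(m+ℓ-v) := by rw [← pow_add]; congr 1; omega
      · intro j₁ hj₁ j₂ hj₂ heq
        simp only [Prod.mk.injEq] at heq
        obtain ⟨he1, he2⟩ := heq
        -- α₁ = α₂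
        obtain ⟨c₁, hc₁⟩ := hdvd j₁
        obtain ⟨c₂, hc₂⟩ := hdvd j₂
        rw [hc₁, hc₂, Int.mul_ediv_cancel_left _ (by positivity),
          Int.mul_ediv_cancel_left _ (by positivity)] at he1
        have hαeq : smod ((r:ℤ)*(j₁:ℤ)) ((2:ℤ)^(m+ℓ)) = smod ((r:ℤ)*(j₂:ℤ)) ((2:ℤ)^(m+ℓ)) := by
          rw [hc₁, hc₂, he1]
        -- N ∣ r(j₁ - j₂)
        have hs1 := smod_dvd_sub ((r:ℤ)*(j₁:ℤ)) ((2:ℤ)^(m+ℓ))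
        have hs2 := smod_dvd_sub ((r:ℤ)*(j₂:ℤ)) ((2:ℤ)^(m+ℓ))
        have hNdvd : ((2:ℤ)^(m+ℓ)) ∣ (r:ℤ)*(j₁:ℤ) - (r:ℤ)*(j₂:ℤ) := by
          have := dvd_sub hs1 hs2
          rw [hαeq] at this
          simpa using this
        -- cancel 2^v
        have hsplit : ((2:ℤ)^(m+ℓ)) = (2:ℤ)^v * 2^(m+ℓ-v) := by
          rw [← pow_add]; congr 1; omega
        have hfac : (r:ℤ)*(j₁:ℤ) - (r:ℤ)*(j₂:ℤ) = (2:ℤ)^v * ((r':ℤ) * ((j₁:ℤ) - (j₂:ℤ))) := by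
          have : (r:ℤ) = (2:ℤ)^v * (r':ℤ) := by exact_mod_cast (congrArg (Nat.cast : ℕ → ℤ) hrr).symm
          rw [this]; ring
        have hNdvd2 : ((2:ℤ)^(m+ℓ-v)) ∣ (r':ℤ) * ((j₁:ℤ) - (j₂:ℤ)) := by
          rw [hsplit, hfac] at hNdvd
          exact (mul_dvd_mul_iff_left (by positivity : (2:ℤ)^v ≠ 0)).mp hNdvd
        -- r' is odd, so coprime
        have hcop : Nat.Coprime (2^(m+ℓ-v)) r' :=
          Nat.Coprime.pow_left _ ((Nat.prime_two.coprime_iff_not_dvd).mpr hodd)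
        have hnat : 2^(m+ℓ-v) ∣ (r' * ((j₁:ℤ) - (j₂:ℤ)).natAbs) := by
          have h := Int.natAbs_dvd_natAbs.mpr hNdvd2
          simpa [Int.natAbs_mul, Int.natAbs_pow] using h
        have hdvdj : 2^(m+ℓ-v) ∣ ((j₁:ℤ) - (j₂:ℤ)).natAbs :=
          (Nat.Coprime.dvd_of_dvd_mul_left hcop) hnat
        have hdvdj' : ((2:ℤ)^(m+ℓ-v)) ∣ ((j₁:ℤ) - (j₂:ℤ)) := by
          have h := Int.dvd_natAbs.mp (Int.natCast_dvd_natCast.mpr hdvdj)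
          exact_mod_cast h
        have hmod : j₂ ≡ j₁ [MOD 2^(m+ℓ-v)] := by
          rw [Nat.modEq_iff_dvd]
          exact_mod_cast hdvdj'
        have hmm := hmod.symm
        -- j₁ = j₂
        have hmod' : j₁ % 2^(m+ℓ-v) = j₂ % 2^(m+ℓ-v) := hmm
        calc j₁ = 2^(m+ℓ-v) * (j₁ / 2^(m+ℓ-v)) + j₁ % 2^(m+ℓ-v) := (Nat.div_add_mod _ _).symm
          _ = 2^(m+ℓ-v) * (j₂ / 2^(m+ℓ-v)) + j₂ % 2^(m+ℓ-v) := by rw [he2, hmod']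
          _ = j₂ := Nat.div_add_mod _ _
    have hIoo : ((Finset.Ioo (-(2^(t-v)) : ℤ) (2^(t-v))) ×ˢ Finset.range (2^v)).card ≤ 2^(t+1) := by
      rw [Finset.card_product, Int.card_Ioo, Finset.card_range]
      have h1 : ((2:ℤ)^(t-v) - (-(2^(t-v))) - 1).toNat = 2 * 2^(t-v) - 1 := by
        have he : (2:ℤ)^(t-v) = ((2^(t-v) : ℕ) : ℤ) := by push_cast; rfl
        rw [he]
        have : (0:ℕ) < 2^(t-v) := by positivity
        omega
      rw [h1]
      calc (2 * 2^(t-v) - 1) * 2^v ≤ 2 * 2^(t-v) * 2^v := by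
            apply Nat.mul_le_mul_right; omega
        _ = 2 * 2^(t-v+v) := by rw [pow_add]; ring
        _ = 2^(t+1) := by rw [Nat.sub_add_cancel hvt.le]; rw [pow_succ]; ring
    have hcard : S.card ≤ 2^(t+1) := le_trans hcard2 hIoo
    have hsum := Finset.sum_le_card_nsmul S _ _ hterm
    calc (∑ j ∈ S, ShorP r m ℓ ((smod ((r : ℤ) * (j : ℤ)) ((2 : ℤ) ^ (m + ℓ)) : ℤ) : ℝ))
        ≤ S.card • (2:ℝ)^(2 - (m:ℤ)) := hsum
      _ = (S.card : ℝ) * (2:ℝ)^(2 - (m:ℤ)) := by rw [nsmul_eq_mul]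
      _ ≤ (2:ℝ)^(t+1) * (2:ℝ)^(2 - (m:ℤ)) := by
          apply mul_le_mul_of_nonneg_right _ (by positivity)
          exact_mod_cast hcard
      _ = (2:ℝ)^((t:ℤ)+3-(m:ℤ)) := by
          rw [← zpow_natCast (2:ℝ) (t+1), ← zpow_add₀ (by norm_num : (2:ℝ) ≠ 0)]
          congr 1
          push_cast
          ring
  · rw [Finset.not_nonempty_iff_eq_empty] at hne
    rw [hne, Finset.sum_empty]
    positivity
end
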